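/- arXiv:2408.07610 — 7 statements merged into one kernel-verified Lean document; each statement's English description precedes it below -/
import Mathlib

section
/- A Borel measurable function α : [1,∞) → (0,∞) belongs to the class RO if and only if it admits a representation α(t) = exp(β(t) + ∫₁ᵗ γ(τ)/τ dτ) for all t ≥ 1, where β, γ : [1,∞) → ℝ are Borel measurable bounded functions. -/
/-- A Borel measurable function `α : [1,∞) → (0,∞)` belongs to the class RO if there
exist `b > 1` and `c ≥ 1` such that `c⁻¹ ≤ α (λ t) / α t ≤ c` for all `t ≥ 1`,
`λ ∈ [1, b]`. -/
def IsRO (α : ℝ → ℝ) : Prop :=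
  Measurable (fun t : Set.Ici (1 : ℝ) => α t.1) ∧
  (∀ t : ℝ, 1 ≤ t → 0 < α t) ∧
  ∃ b : ℝ, 1 < b ∧ ∃ c : ℝ, 1 ≤ c ∧ ∀ t : ℝ, 1 ≤ t → ∀ l : ℝ, 1 ≤ l → l ≤ b →
    c⁻¹ ≤ α (l * t) / α t ∧ α (l * t) / α t ≤ c

/-!
Write `f = log α`. Membership in RO says that the increments `|f s - f t|` are bounded for
`1 ≤ t ≤ s ≤ b t`, hence, by chaining, for `1 ≤ t ≤ s ≤ Λ t` with any fixed `Λ`. Conversely the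
representation gives such a bound at once, since `|∫ₜˢ γ τ / τ dτ| ≤ ‖γ‖∞ log (s / t)`.

For the representation take `γ t = f (e t) - f t`. The measure `dx / x` is invariant under
dilations, so up to a constant `∫₁ᵗ γ τ / τ dτ` is `∫ₜ^{e t} f x / x dx`, the mean of `f` over
`[t, e t]` for `dx / x`; it differs from `f t` by at most the increment bound for `Λ = e`, so
`β = f - ∫₁ᵗ γ τ / τ dτ` is bounded.
-/

open Real Set MeasureTheory intervalIntegral

lemma measurable_indicator_of_measurable_subtype {X Y : Type*} [MeasurableSpace X]
    [MeasurableSpace Y] [Zero Y] {s : Set X} (hs : MeasurableSet s) {f : X → Y}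
    (hf : Measurable fun x : s => f x) : Measurable (s.indicator f) :=
  measurable_of_restrict_of_restrict_compl hs
    (by convert hf using 1; funext x; exact indicator_of_mem x.2 f)
    (by convert measurable_const (a := (0 : Y)) using 1; funext x; exact indicator_of_notMem x.2 f)

lemma inv_le_div_and_div_le_iff_abs_log_sub_le {x y c : ℝ} (hx : 0 < x) (hy : 0 < y)
    (hc : 0 < c) : c⁻¹ ≤ x / y ∧ x / y ≤ c ↔ |log x - log y| ≤ log c := by
  have hxy : 0 < x / y := div_pos hx hy
  rw [abs_le, ← log_div hx.ne' hy.ne', ← log_inv, log_le_log_iff (inv_pos.2 hc) hxy,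
    log_le_log_iff hxy hc]

section Oscillation

variable {f : ℝ → ℝ} {b C : ℝ}

lemma abs_sub_le_of_le_pow_mul (hb : 1 < b)
    (hosc : ∀ t s, 1 ≤ t → t ≤ s → s ≤ b * t → |f s - f t| ≤ C) (m : ℕ) :
    ∀ t s, 1 ≤ t → t ≤ s → s ≤ b ^ m * t → |f s - f t| ≤ m * C := by
  have hC : 0 ≤ C := (abs_nonneg _).trans (hosc 1 1 le_rfl le_rfl (by linarith))
  induction m with
  | zero =>
    intro t s _ hts hst
    simp [le_antisymm (by simpa using hst) hts]
  | succ m ih =>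
    intro t s ht hts hst
    rcases le_or_gt s (b * t) with hsb | hsb
    · calc |f s - f t| ≤ C := hosc t s ht hts hsb
        _ ≤ (m + 1 : ℕ) * C := le_mul_of_one_le_left hC (by norm_cast; omega)
    · have hb0 : 0 < b := by linarith
      have htu : t ≤ s / b := by rw [le_div_iff₀ hb0]; linarith
      have hus : s / b ≤ s := div_le_self (by linarith) hb.le
      have hsu : s ≤ b * (s / b) := by rw [mul_div_cancel₀ s hb0.ne']
      have hut : s / b ≤ b ^ m * t := by
        rw [div_le_iff₀ hb0]
        calc s ≤ b ^ (m + 1) * t := hst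
          _ = b ^ m * t * b := by ring
      calc |f s - f t| ≤ |f s - f (s / b)| + |f (s / b) - f t| := abs_sub_le _ _ _
        _ ≤ C + m * C := add_le_add (hosc _ s (ht.trans htu) hus hsu) (ih t _ ht htu hut)
        _ = (m + 1 : ℕ) * C := by push_cast; ring

lemma exists_abs_sub_le_of_le_mul (hb : 1 < b)
    (hosc : ∀ t s, 1 ≤ t → t ≤ s → s ≤ b * t → |f s - f t| ≤ C) (Λ : ℝ) :
    ∃ M, ∀ t s, 1 ≤ t → t ≤ s → s ≤ Λ * t → |f s - f t| ≤ M := by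
  obtain ⟨m, hm⟩ := pow_unbounded_of_one_lt Λ hb
  refine ⟨m * C, fun t s ht hts hst => abs_sub_le_of_le_pow_mul hb hosc m t s ht hts ?_⟩
  exact hst.trans (mul_le_mul_of_nonneg_right hm.le (by linarith))

lemma exists_abs_le_of_abs_sub_le (hb : 1 < b)
    (hosc : ∀ t s, 1 ≤ t → t ≤ s → s ≤ b * t → |f s - f t| ≤ C) (T : ℝ) :
    ∃ K, ∀ x ∈ Icc 1 T, |f x| ≤ K := by
  obtain ⟨M, hM⟩ := exists_abs_sub_le_of_le_mul hb hosc T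
  refine ⟨|f 1| + M, fun x hx => ?_⟩
  have := hM 1 x le_rfl hx.1 (by simpa using hx.2)
  linarith [abs_sub_abs_le_abs_sub (f x) (f 1)]

end Oscillation

lemma integral_comp_mul_div (f : ℝ → ℝ) {c : ℝ} (hc : c ≠ 0) (a b : ℝ) :
    ∫ x in a..b, f (c * x) / x = ∫ x in c * a..c * b, f x / x := by
  have h : ∀ x, f (c * x) / x = c * (f (c * x) / (c * x)) := fun x => by
    rcases eq_or_ne x 0 with rfl | hx
    · simp
    · field_simp
  simp_rw [h]
  rw [intervalIntegral.integral_const_mul, ← smul_eq_mul]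
  exact smul_integral_comp_mul_left (fun x => f x / x) c

section LogIntegral

variable {f : ℝ → ℝ} {a b M : ℝ}

lemma intervalIntegrable_div_of_abs_le (ha : 0 < a) (hab : a ≤ b)
    (hf : AEStronglyMeasurable f (volume.restrict (Ioc a b))) (hM : ∀ x ∈ Ioc a b, |f x| ≤ M) :
    IntervalIntegrable (fun x => f x / x) volume a b := by
  rw [intervalIntegrable_iff_integrableOn_Ioc_of_le hab]
  refine Integrable.of_bound (hf.div₀ aestronglyMeasurable_id) (M / a)
    (ae_restrict_of_forall_mem measurableSet_Ioc fun x hx => ?_)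
  rw [norm_div, Real.norm_eq_abs, Real.norm_eq_abs, abs_of_pos (ha.trans hx.1)]
  exact div_le_div₀ ((abs_nonneg _).trans (hM x hx)) (hM x hx) ha hx.1.le

lemma abs_integral_div_le (ha : 0 < a) (hab : a ≤ b) (hM : ∀ x ∈ Ioc a b, |f x| ≤ M) :
    |∫ x in a..b, f x / x| ≤ M * log (b / a) := by
  have hinv : IntervalIntegrable (fun x : ℝ => x⁻¹) volume a b :=
    intervalIntegrable_inv (fun x hx => by rw [uIcc_of_le hab] at hx; linarith [hx.1])
      continuousOn_id
  calc |∫ x in a..b, f x / x| = ‖∫ x in a..b, f x / x‖ := (Real.norm_eq_abs _).symm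
    _ ≤ ∫ x in a..b, M * x⁻¹ := by
        refine norm_integral_le_of_norm_le hab (ae_of_all _ fun x hx => ?_) (hinv.const_mul M)
        rw [norm_div, Real.norm_eq_abs, Real.norm_eq_abs, abs_of_pos (ha.trans hx.1),
          div_eq_mul_inv]
        exact mul_le_mul_of_nonneg_right (hM x hx) (inv_nonneg.2 (ha.trans hx.1).le)
    _ = M * log (b / a) := by
        rw [intervalIntegral.integral_const_mul, integral_inv_of_pos ha (ha.trans_le hab)]

lemma integral_sub_comp_mul_div {c t : ℝ} (hc : 1 ≤ c) (ht : 1 ≤ t)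
    (hfc : IntervalIntegrable (fun x => f (c * x) / x) volume 1 t)
    (hf : IntervalIntegrable (fun x => f x / x) volume 1 (c * t)) :
    ∫ x in 1..t, (f (c * x) - f x) / x =
      (∫ x in t..c * t, f x / x) - ∫ x in 1..c, f x / x := by
  have hsub : ∀ u, 1 ≤ u → u ≤ c * t → IntervalIntegrable (fun x => f x / x) volume 1 u :=
    fun u hu huct => hf.mono_set (uIcc_subset_uIcc left_mem_uIcc (mem_uIcc_of_le hu huct))
  have hct : 1 ≤ c * t := one_le_mul_of_one_le_of_one_le hc ht
  have h1 := integral_interval_sub_left hf (hsub c hc (le_mul_of_one_le_right (by linarith) ht))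
  have h2 := integral_interval_sub_left hf (hsub t ht (le_mul_of_one_le_left (by linarith) hc))
  simp_rw [sub_div]
  rw [intervalIntegral.integral_sub hfc (hsub t ht (le_mul_of_one_le_left (by linarith) hc)),
    integral_comp_mul_div f (by linarith : c ≠ 0), mul_one]
  linarith

end LogIntegral

lemma abs_sub_integral_comp_exp_one_mul_sub_le {f : ℝ → ℝ} (hf : Measurable f)
    (hloc : ∀ T, ∃ K, ∀ x ∈ Icc 1 T, |f x| ≤ K) {M : ℝ}
    (hM : ∀ t s, 1 ≤ t → t ≤ s → s ≤ exp 1 * t → |f s - f t| ≤ M) {t : ℝ} (ht : 1 ≤ t) :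
    |f t - ∫ τ in 1..t, (f (exp 1 * τ) - f τ) / τ| ≤ M + |∫ x in 1..exp 1, f x / x| := by
  have hint : ∀ {g : ℝ → ℝ}, Measurable g → ∀ {u v}, 1 ≤ u → u ≤ v →
      (∃ K, ∀ x ∈ Icc 1 v, |g x| ≤ K) → IntervalIntegrable (fun x => g x / x) volume u v :=
    fun hg u v hu huv ⟨K, hK⟩ => intervalIntegrable_div_of_abs_le (by linarith) huv
      hg.aestronglyMeasurable fun x hx => hK x ⟨hu.trans hx.1.le, hx.2⟩
  have he : 1 ≤ exp 1 := one_le_exp zero_le_one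
  have hte : t ≤ exp 1 * t := le_mul_of_one_le_left (by linarith) he
  have hlog : log (exp 1 * t / t) = 1 := by
    rw [mul_div_cancel_right₀ _ (by linarith : t ≠ 0), log_exp]
  obtain ⟨B, hB⟩ := hloc (exp 1 * t)
  have hfe : IntervalIntegrable (fun x => f (exp 1 * x) / x) volume 1 t :=
    hint (hf.comp (measurable_const_mul _)) le_rfl ht ⟨B, fun x hx =>
      hB _ ⟨one_le_mul_of_one_le_of_one_le he hx.1, mul_le_mul_of_nonneg_left hx.2 (exp_pos 1).le⟩⟩
  have hmean : f t - ∫ x in t..exp 1 * t, f x / x = ∫ x in t..exp 1 * t, (f t - f x) / x := by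
    simp_rw [sub_div]
    rw [intervalIntegral.integral_sub (hint measurable_const ht hte ⟨|f t|, fun _ _ => le_rfl⟩)
      (hint hf ht hte ⟨B, fun x hx => hB x hx⟩)]
    simp_rw [div_eq_mul_inv]
    rw [intervalIntegral.integral_const_mul, integral_inv_of_pos (by linarith) (by linarith),
      hlog, mul_one]
  rw [integral_sub_comp_mul_div he ht hfe (hint hf le_rfl (ht.trans hte) ⟨B, hB⟩),
    sub_sub_eq_add_sub, add_sub_right_comm, hmean]
  calc |(∫ x in t..exp 1 * t, (f t - f x) / x) + ∫ x in 1..exp 1, f x / x|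
      ≤ M * log (exp 1 * t / t) + |∫ x in 1..exp 1, f x / x| :=
        (abs_add_le _ _).trans (add_le_add_left (abs_integral_div_le (by linarith) hte
          fun x hx => (abs_sub_comm _ _).trans_le (hM t x ht hx.1.le hx.2)) _)
    _ = M + |∫ x in 1..exp 1, f x / x| := by rw [hlog, mul_one]

theorem exists_eq_add_integral_of_abs_sub_le {f : ℝ → ℝ} (hf : Measurable f) {b C : ℝ}
    (hb : 1 < b) (hosc : ∀ t s, 1 ≤ t → t ≤ s → s ≤ b * t → |f s - f t| ≤ C) :
    ∃ β γ : ℝ → ℝ, Measurable β ∧ Measurable γ ∧ (∃ Mb, ∀ t, 1 ≤ t → |β t| ≤ Mb) ∧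
      (∃ Mg, ∀ t, 1 ≤ t → |γ t| ≤ Mg) ∧ ∀ t, 1 ≤ t → f t = β t + ∫ τ in 1..t, γ τ / τ := by
  obtain ⟨M, hM⟩ := exists_abs_sub_le_of_le_mul hb hosc (exp 1)
  have hM0 : 0 ≤ M := (abs_nonneg _).trans (hM 1 1 le_rfl le_rfl (by simp))
  set γ := (Ici (1 : ℝ)).indicator fun t => f (exp 1 * t) - f t
  have hγ : Measurable γ :=
    ((hf.comp (measurable_const_mul _)).sub hf).indicator measurableSet_Ici
  have hγ_of_le : ∀ t, 1 ≤ t → γ t = f (exp 1 * t) - f t := fun t ht => indicator_of_mem ht _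
  have hγM : ∀ t, 1 ≤ t → |γ t| ≤ M := fun t ht => by
    rw [hγ_of_le t ht]
    exact hM t _ ht (le_mul_of_one_le_left (by linarith) (one_le_exp zero_le_one)) le_rfl
  have hγint : ∀ u v, IntervalIntegrable (fun τ => γ τ / τ) volume u v := fun u v => by
    refine (intervalIntegrable_const (c := M)).mono_fun'
      (hγ.div measurable_id).aestronglyMeasurable (ae_of_all _ fun τ => ?_)
    show ‖γ τ / τ‖ ≤ M
    by_cases hτ : 1 ≤ τ
    · rw [norm_div, Real.norm_eq_abs, Real.norm_eq_abs, abs_of_pos (by linarith : (0 : ℝ) < τ)]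
      exact (div_le_self (abs_nonneg _) hτ).trans (hγM τ hτ)
    · simpa [γ, indicator_of_notMem (show τ ∉ Ici 1 from hτ)] using hM0
  refine ⟨fun t => f t - ∫ τ in 1..t, γ τ / τ, γ,
    hf.sub (continuous_primitive hγint 1).measurable, hγ,
    ⟨M + |∫ x in 1..exp 1, f x / x|, fun t ht => ?_⟩, ⟨M, hγM⟩, fun t _ => by ring⟩
  have hγ_integral : ∫ τ in 1..t, γ τ / τ = ∫ τ in 1..t, (f (exp 1 * τ) - f τ) / τ :=
    integral_congr fun τ hτ => by
      rw [uIcc_of_le ht] at hτ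
      simp only [hγ_of_le τ hτ.1]
  show |f t - ∫ τ in 1..t, γ τ / τ| ≤ _
  rw [hγ_integral]
  exact abs_sub_integral_comp_exp_one_mul_sub_le hf (exists_abs_le_of_abs_sub_le hb hosc) hM ht

lemma abs_sub_le_of_eq_add_integral {f β γ : ℝ → ℝ} {Mb Mg : ℝ}
    (hγ : Measurable fun t : Ici (1 : ℝ) => γ t)
    (hβM : ∀ t, 1 ≤ t → |β t| ≤ Mb) (hγM : ∀ t, 1 ≤ t → |γ t| ≤ Mg)
    (hrep : ∀ t, 1 ≤ t → f t = β t + ∫ τ in 1..t, γ τ / τ) {t s : ℝ} (ht : 1 ≤ t)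
    (hts : t ≤ s) :
    |f s - f t| ≤ 2 * Mb + Mg * log (s / t) := by
  have hγ_ae : ∀ u v, 1 ≤ u → AEStronglyMeasurable γ (volume.restrict (Ioc u v)) :=
    fun u v hu => (aemeasurable_restrict_of_measurable_subtype measurableSet_Ici hγ
      |>.mono_measure (Measure.restrict_mono (fun x hx => hu.trans hx.1.le) le_rfl)
      |>.aestronglyMeasurable)
  have hint : ∀ u, 1 ≤ u → IntervalIntegrable (fun τ => γ τ / τ) volume 1 u :=
    fun u hu => intervalIntegrable_div_of_abs_le one_pos hu (hγ_ae 1 u le_rfl)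
      fun x hx => hγM x hx.1.le
  have hdiff : f s - f t = β s - β t + ∫ τ in t..s, γ τ / τ := by
    rw [hrep s (ht.trans hts), hrep t ht,
      ← integral_interval_sub_left (hint s (ht.trans hts)) (hint t ht)]
    ring
  rw [hdiff]
  calc |β s - β t + ∫ τ in t..s, γ τ / τ|
      ≤ |β s| + |β t| + |∫ τ in t..s, γ τ / τ| :=
        (abs_add_le _ _).trans (add_le_add_left (abs_sub _ _) _)
    _ ≤ Mb + Mb + Mg * log (s / t) :=
        add_le_add (add_le_add (hβM s (ht.trans hts)) (hβM t ht))
          (abs_integral_div_le (by linarith) hts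
            fun x hx => hγM x (ht.trans hx.1.le))
    _ = 2 * Mb + Mg * log (s / t) := by ring

lemma exists_eq_exp_add_integral_of_ro_bound {α : ℝ → ℝ}
    (hmeas : Measurable fun t : Ici (1 : ℝ) => α t) (hpos : ∀ t, 1 ≤ t → 0 < α t) {b c : ℝ}
    (hb : 1 < b) (hc : 0 < c)
    (hRO : ∀ t, 1 ≤ t → ∀ l, 1 ≤ l → l ≤ b → c⁻¹ ≤ α (l * t) / α t ∧ α (l * t) / α t ≤ c) :
    ∃ β γ : ℝ → ℝ, Measurable β ∧ Measurable γ ∧ (∃ Mb, ∀ t, 1 ≤ t → |β t| ≤ Mb) ∧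
      (∃ Mg, ∀ t, 1 ≤ t → |γ t| ≤ Mg) ∧
      ∀ t, 1 ≤ t → α t = exp (β t + ∫ τ in 1..t, γ τ / τ) := by
  set L := (Ici (1 : ℝ)).indicator fun t => log (α t)
  have hL : ∀ t, 1 ≤ t → L t = log (α t) := fun t ht => indicator_of_mem ht _
  have hosc : ∀ t s, 1 ≤ t → t ≤ s → s ≤ b * t → |L s - L t| ≤ log c := by
    intro t s ht hts hsb
    have ht0 : 0 < t := by linarith
    have h := hRO t ht (s / t) ((one_le_div ht0).2 hts) ((div_le_iff₀ ht0).2 hsb)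
    rw [div_mul_cancel₀ s ht0.ne'] at h
    rwa [hL t ht, hL s (ht.trans hts), ← inv_le_div_and_div_le_iff_abs_log_sub_le
      (hpos s (ht.trans hts)) (hpos t ht) hc]
  obtain ⟨β, γ, hβ, hγ, hβM, hγM, hrep⟩ := exists_eq_add_integral_of_abs_sub_le
    (measurable_indicator_of_measurable_subtype measurableSet_Ici hmeas.log) hb hosc
  refine ⟨β, γ, hβ, hγ, hβM, hγM, fun t ht => ?_⟩
  exact (exp_log (hpos t ht)).symm.trans (congrArg exp ((hL t ht).symm.trans (hrep t ht)))

lemma ro_bound_of_eq_exp_add_integral {α β γ : ℝ → ℝ} (hpos : ∀ t, 1 ≤ t → 0 < α t)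
    (hγ : Measurable fun t : Ici (1 : ℝ) => γ t) {Mb Mg : ℝ}
    (hβM : ∀ t, 1 ≤ t → |β t| ≤ Mb) (hγM : ∀ t, 1 ≤ t → |γ t| ≤ Mg)
    (hrep : ∀ t, 1 ≤ t → α t = exp (β t + ∫ τ in 1..t, γ τ / τ)) :
    ∃ b : ℝ, 1 < b ∧ ∃ c : ℝ, 1 ≤ c ∧ ∀ t : ℝ, 1 ≤ t → ∀ l : ℝ, 1 ≤ l → l ≤ b →
      c⁻¹ ≤ α (l * t) / α t ∧ α (l * t) / α t ≤ c := by
  have hlog : ∀ t, 1 ≤ t → log (α t) = β t + ∫ τ in (1 : ℝ)..t, γ τ / τ :=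
    fun t ht => by rw [hrep t ht, log_exp]
  have hMb : 0 ≤ Mb := (abs_nonneg _).trans (hβM 1 le_rfl)
  have hMg : 0 ≤ Mg := (abs_nonneg _).trans (hγM 1 le_rfl)
  refine ⟨2, one_lt_two, exp (2 * Mb + Mg * log 2),
    one_le_exp (by positivity), fun t ht l hl1 hl2 => ?_⟩
  have htl : t ≤ l * t := le_mul_of_one_le_left (by linarith) hl1
  rw [inv_le_div_and_div_le_iff_abs_log_sub_le (hpos _ (ht.trans htl)) (hpos t ht) (exp_pos _),
    log_exp]
  calc |log (α (l * t)) - log (α t)| ≤ 2 * Mb + Mg * log (l * t / t) :=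
        abs_sub_le_of_eq_add_integral hγ hβM hγM hlog ht htl
    _ ≤ 2 * Mb + Mg * log 2 := by
        rw [mul_div_cancel_right₀ l (by linarith : t ≠ 0)]
        gcongr

/-- Integral description of the class RO: a Borel measurable positive function `α` on
`[1,∞)` is RO-varying iff `α t = exp (β t + ∫₁ᵗ γ τ / τ dτ)` for all `t ≥ 1`, for some
Borel measurable bounded functions `β γ : [1,∞) → ℝ`. -/
theorem stmt1 (α : ℝ → ℝ) :
    IsRO α ↔
      (Measurable (fun t : Set.Ici (1 : ℝ) => α t.1) ∧
        (∀ t : ℝ, 1 ≤ t → 0 < α t) ∧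
        ∃ β γ : ℝ → ℝ,
          Measurable (fun t : Set.Ici (1 : ℝ) => β t.1) ∧
          Measurable (fun t : Set.Ici (1 : ℝ) => γ t.1) ∧
          (∃ Mb : ℝ, ∀ t : ℝ, 1 ≤ t → |β t| ≤ Mb) ∧
          (∃ Mg : ℝ, ∀ t : ℝ, 1 ≤ t → |γ t| ≤ Mg) ∧
          ∀ t : ℝ, 1 ≤ t → α t = Real.exp (β t + ∫ τ in (1 : ℝ)..t, γ τ / τ)) := by
  constructor
  · rintro ⟨hmeas, hpos, b, hb, c, hc, hRO⟩
    obtain ⟨β, γ, hβ, hγ, hβM, hγM, hrep⟩ :=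
      exists_eq_exp_add_integral_of_ro_bound hmeas hpos hb (by linarith) hRO
    exact ⟨hmeas, hpos, β, γ, hβ.comp measurable_subtype_coe, hγ.comp measurable_subtype_coe,
      hβM, hγM, hrep⟩
  · rintro ⟨hmeas, hpos, β, γ, -, hγ, ⟨Mb, hβM⟩, ⟨Mg, hγM⟩, hrep⟩
    exact ⟨hmeas, hpos, ro_bound_of_eq_exp_add_integral hpos hγ hβM hγM hrep⟩
end

section
/- For any s ∈ ℝ and r ∈ (0,1), the function α(t) = t^s e^{(ln t)^r}, defined for t ≥ 1, belongs to the class RO and satisfies σ₀(α) = σ₁(α) = s. -/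
/-- The lower Matuszewska index `σ₀(α)`: the supremum of all `s₀` for which
`c₀ λ^{s₀} ≤ α (λ t) / α t` (for some `c₀ > 0`) for all `t ≥ 1`, `λ ≥ 1`. -/
noncomputable def sigma0 (α : ℝ → ℝ) : ℝ :=
  sSup {s : ℝ | ∃ c : ℝ, 0 < c ∧ ∀ t : ℝ, 1 ≤ t → ∀ l : ℝ, 1 ≤ l →
    c * l ^ s ≤ α (l * t) / α t}

/-- The upper Matuszewska index `σ₁(α)`: the infimum of all `s₁` for which
`α (λ t) / α t ≤ c₁ λ^{s₁}` (for some `c₁ > 0`) for all `t ≥ 1`, `λ ≥ 1`. -/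
noncomputable def sigma1 (α : ℝ → ℝ) : ℝ :=
  sInf {s : ℝ | ∃ c : ℝ, 0 < c ∧ ∀ t : ℝ, 1 ≤ t → ∀ l : ℝ, 1 ≤ l →
    α (l * t) / α t ≤ c * l ^ s}

open Real

/-- Subadditivity of `x ↦ x^r` on nonnegatives for `r ∈ [0,1]`. -/
lemma my_rpow_subadd {r : ℝ} (hr0 : 0 ≤ r) (hr1 : r ≤ 1) {a b : ℝ} (ha : 0 ≤ a) (hb : 0 ≤ b) :
    (a + b) ^ r ≤ a ^ r + b ^ r := by
  have h := NNReal.rpow_add_le_add_rpow a.toNNReal b.toNNReal hr0 hr1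
  have h' := (NNReal.coe_le_coe).2 h
  push_cast at h'
  rwa [Real.coe_toNNReal a ha, Real.coe_toNNReal b hb] at h'

/-- The key ratio formula. -/
lemma my_ratio_eq (s r : ℝ) {t l : ℝ} (ht : 1 ≤ t) (hl : 1 ≤ l) :
    ((l * t) ^ s * Real.exp (Real.log (l * t) ^ r)) / (t ^ s * Real.exp (Real.log t ^ r))
      = l ^ s * Real.exp ((Real.log l + Real.log t) ^ r - Real.log t ^ r) := by
  have ht0 : (0 : ℝ) < t := zero_lt_one.trans_le ht
  have hl0 : (0 : ℝ) < l := zero_lt_one.trans_le hl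
  rw [Real.log_mul hl0.ne' ht0.ne', Real.mul_rpow hl0.le ht0.le, Real.exp_sub]
  have h1 : t ^ s ≠ 0 := (Real.rpow_pos_of_pos ht0 s).ne'
  have h2 : Real.exp (Real.log t ^ r) ≠ 0 := (Real.exp_pos _).ne'
  field_simp

/-- Lower bound for the ratio. -/
lemma my_ratio_lower (s : ℝ) {r : ℝ} (hr0 : 0 < r) {t l : ℝ} (ht : 1 ≤ t) (hl : 1 ≤ l) :
    l ^ s ≤ ((l * t) ^ s * Real.exp (Real.log (l * t) ^ r))
      / (t ^ s * Real.exp (Real.log t ^ r)) := by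
  rw [my_ratio_eq s r ht hl]
  have h1 : Real.log t ^ r ≤ (Real.log l + Real.log t) ^ r :=
    Real.rpow_le_rpow (Real.log_nonneg ht) (le_add_of_nonneg_left (Real.log_nonneg hl)) hr0.le
  have h2 : (1 : ℝ) ≤ Real.exp ((Real.log l + Real.log t) ^ r - Real.log t ^ r) :=
    Real.one_le_exp (by linarith)
  have hls : 0 < l ^ s := Real.rpow_pos_of_pos (zero_lt_one.trans_le hl) s
  nlinarith

/-- Upper bound for the ratio. -/
lemma my_ratio_upper (s : ℝ) {r : ℝ} (hr0 : 0 < r) (hr1 : r < 1) {t l : ℝ}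
    (ht : 1 ≤ t) (hl : 1 ≤ l) :
    ((l * t) ^ s * Real.exp (Real.log (l * t) ^ r)) / (t ^ s * Real.exp (Real.log t ^ r))
      ≤ l ^ s * Real.exp (Real.log l ^ r) := by
  rw [my_ratio_eq s r ht hl]
  have h1 : (Real.log l + Real.log t) ^ r ≤ Real.log l ^ r + Real.log t ^ r :=
    my_rpow_subadd hr0.le hr1.le (Real.log_nonneg hl) (Real.log_nonneg ht)
  have h2 : Real.exp ((Real.log l + Real.log t) ^ r - Real.log t ^ r)
      ≤ Real.exp (Real.log l ^ r) := Real.exp_le_exp.2 (by linarith)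
  have hls : 0 ≤ l ^ s := (Real.rpow_pos_of_pos (zero_lt_one.trans_le hl) s).le
  exact mul_le_mul_of_nonneg_left h2 hls

/-- `x^r ≤ ε x + C` for a suitable constant. -/
lemma my_rpow_le_linear {r ε : ℝ} (hr0 : 0 < r) (hr1 : r < 1) (hε : 0 < ε) :
    ∀ x : ℝ, 0 ≤ x → x ^ r ≤ ε * x + (ε ^ (-(1 - r)⁻¹)) ^ r := by
  intro x hx
  set X : ℝ := ε ^ (-(1 - r)⁻¹) with hX
  have hX0 : 0 < X := Real.rpow_pos_of_pos hε _
  have hXr : X ^ (r - 1) = ε := by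
    rw [hX, ← Real.rpow_mul hε.le,
      show -(1 - r)⁻¹ * (r - 1) = (1 - r)⁻¹ * (1 - r) by ring,
      inv_mul_cancel₀ (by linarith : (1 : ℝ) - r ≠ 0), Real.rpow_one]
  rcases le_total x X with h | h
  · have : x ^ r ≤ X ^ r := Real.rpow_le_rpow hx h hr0.le
    nlinarith [mul_nonneg hε.le hx]
  · have hx0 : 0 < x := hX0.trans_le h
    have h1 : x ^ (r - 1) ≤ X ^ (r - 1) :=
      Real.rpow_le_rpow_of_nonpos hX0 h (by linarith)
    have h2 : x ^ r = x ^ (r - 1) * x := by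
      rw [show r = r - 1 + 1 by ring, Real.rpow_add_one hx0.ne']
      ring_nf
    have h3 : x ^ (r - 1) * x ≤ ε * x := by
      rw [hXr] at h1
      exact mul_le_mul_of_nonneg_right h1 hx0.le
    have : (0 : ℝ) ≤ X ^ r := (Real.rpow_pos_of_pos hX0 r).le
    linarith [h2 ▸ h3]

/-- For any `s ∈ ℝ` and `r ∈ (0,1)`, the function `α t = t^s e^{(ln t)^r}` (for `t ≥ 1`)
belongs to RO and satisfies `σ₀(α) = σ₁(α) = s`. -/
theorem stmt6 (s r : ℝ) (hr0 : 0 < r) (hr1 : r < 1) :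
    IsRO (fun t => t ^ s * Real.exp (Real.log t ^ r)) ∧
      sigma0 (fun t => t ^ s * Real.exp (Real.log t ^ r)) = s ∧
      sigma1 (fun t => t ^ s * Real.exp (Real.log t ^ r)) = s := by
  set α : ℝ → ℝ := fun t => t ^ s * Real.exp (Real.log t ^ r) with hα
  -- basic positivity
  have hpos : ∀ t : ℝ, 1 ≤ t → 0 < α t := by
    intro t ht
    have ht0 : (0 : ℝ) < t := zero_lt_one.trans_le ht
    exact mul_pos (Real.rpow_pos_of_pos ht0 s) (Real.exp_pos _)
  refine ⟨⟨?_, hpos, ?_⟩, ?_, ?_⟩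
  · -- measurability via continuity on Ici 1
    have hc : ContinuousOn α (Set.Ici (1 : ℝ)) := by
      apply ContinuousOn.mul
      · exact ContinuousOn.rpow_const continuousOn_id fun x hx =>
          Or.inl (zero_lt_one.trans_le hx).ne'
      · exact Real.continuous_exp.comp_continuousOn
          (ContinuousOn.rpow_const
            (ContinuousOn.log continuousOn_id fun x hx =>
              (zero_lt_one.trans_le hx).ne')
            (fun _ _ => Or.inr hr0.le))
    exact hc.restrict.measurable
  · -- RO bounds with b = 2
    refine ⟨2, one_lt_two, (2 : ℝ) ^ |s| * Real.exp (Real.log 2 ^ r), ?_, ?_⟩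
    · have h1 : (1 : ℝ) ≤ (2 : ℝ) ^ |s| := Real.one_le_rpow one_le_two (abs_nonneg s)
      have h2 : (1 : ℝ) ≤ Real.exp (Real.log 2 ^ r) :=
        Real.one_le_exp (Real.rpow_nonneg (Real.log_nonneg one_le_two) r)
      nlinarith
    · intro t ht l hl hlb
      have hl0 : (0 : ℝ) < l := zero_lt_one.trans_le hl
      have hlow := my_ratio_lower s hr0 ht hl
      have hup := my_ratio_upper s hr0 hr1 ht hl
      constructor
      · -- lower bound
        have h1 : l ^ (-|s|) ≤ l ^ s :=
          Real.rpow_le_rpow_of_exponent_le hl (neg_abs_le s)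
        have h2 : l ^ |s| ≤ (2 : ℝ) ^ |s| :=
          Real.rpow_le_rpow hl0.le hlb (abs_nonneg s)
        have h3 : (0 : ℝ) < l ^ |s| := Real.rpow_pos_of_pos hl0 _
        have hexp : (1 : ℝ) ≤ Real.exp (Real.log 2 ^ r) :=
          Real.one_le_exp (Real.rpow_nonneg (Real.log_nonneg one_le_two) r)
        have h4 : l ^ |s| ≤ (2 : ℝ) ^ |s| * Real.exp (Real.log 2 ^ r) := by nlinarith
        have h5 : ((2 : ℝ) ^ |s| * Real.exp (Real.log 2 ^ r))⁻¹ ≤ (l ^ |s|)⁻¹ :=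
          inv_anti₀ h3 h4
        have h6 : (l ^ |s|)⁻¹ = l ^ (-|s|) := (Real.rpow_neg hl0.le _).symm
        calc ((2 : ℝ) ^ |s| * Real.exp (Real.log 2 ^ r))⁻¹ ≤ l ^ (-|s|) := h6 ▸ h5
          _ ≤ l ^ s := h1
          _ ≤ α (l * t) / α t := hlow
      · -- upper bound
        have h1 : l ^ s ≤ l ^ |s| :=
          Real.rpow_le_rpow_of_exponent_le hl (le_abs_self s)
        have h2 : l ^ |s| ≤ (2 : ℝ) ^ |s| :=
          Real.rpow_le_rpow hl0.le hlb (abs_nonneg s)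
        have h3 : Real.exp (Real.log l ^ r) ≤ Real.exp (Real.log 2 ^ r) := by
          apply Real.exp_le_exp.2
          exact Real.rpow_le_rpow (Real.log_nonneg hl)
            (Real.log_le_log hl0 hlb) hr0.le
        have h4 : (0 : ℝ) < Real.exp (Real.log l ^ r) := Real.exp_pos _
        have h5 : (0 : ℝ) ≤ l ^ s := (Real.rpow_pos_of_pos hl0 s).le
        calc α (l * t) / α t ≤ l ^ s * Real.exp (Real.log l ^ r) := hup
          _ ≤ (2 : ℝ) ^ |s| * Real.exp (Real.log 2 ^ r) := by nlinarith
  · -- sigma0 = s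
    set S := {s' : ℝ | ∃ c : ℝ, 0 < c ∧ ∀ t : ℝ, 1 ≤ t → ∀ l : ℝ, 1 ≤ l →
      c * l ^ s' ≤ α (l * t) / α t} with hS
    have hmem : s ∈ S := by
      refine ⟨1, one_pos, fun t ht l hl => ?_⟩
      rw [one_mul]
      exact my_ratio_lower s hr0 ht hl
    have hub : ∀ s' ∈ S, s' ≤ s := by
      rintro s' ⟨c, hc, h⟩
      by_contra hcon
      push_neg at hcon
      set ε : ℝ := (s' - s) / 2 with hε
      have hε0 : 0 < ε := by rw [hε]; linarith
      obtain hlin := my_rpow_le_linear hr0 hr1 hε0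
      set C : ℝ := (ε ^ (-(1 - r)⁻¹)) ^ r with hC
      set L : ℝ := Real.exp C / c + 1 with hL
      have hL1 : 1 < L := by
        have : 0 < Real.exp C / c := div_pos (Real.exp_pos _) hc
        rw [hL]; linarith
      set l : ℝ := L ^ ε⁻¹ with hl
      have hl1 : 1 ≤ l := Real.one_le_rpow hL1.le (by positivity)
      have hl0 : (0 : ℝ) < l := zero_lt_one.trans_le hl1
      have hlε : l ^ ε = L := by
        rw [hl, ← Real.rpow_mul (zero_le_one.trans hL1.le),
          inv_mul_cancel₀ hε0.ne', Real.rpow_one]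
      have hα1 : α 1 = 1 := by
        simp [hα, Real.one_rpow, Real.log_one, Real.zero_rpow hr0.ne']
      have hratio : α (l * 1) / α 1 = l ^ s * Real.exp (Real.log l ^ r) := by
        rw [mul_one, hα1, div_one]
      have key := h 1 le_rfl l hl1
      rw [hratio] at key
      -- α l / α 1 ≤ l^s exp(log l ^ r) ≤ l^s * l^ε * exp C
      have hexpb : Real.exp (Real.log l ^ r) ≤ l ^ ε * Real.exp C := by
        have h1 : Real.log l ^ r ≤ ε * Real.log l + C := hlin _ (Real.log_nonneg hl1)
        have h2 : l ^ ε = Real.exp (ε * Real.log l) := by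
          rw [Real.rpow_def_of_pos hl0, mul_comm]
        calc Real.exp (Real.log l ^ r) ≤ Real.exp (ε * Real.log l + C) :=
              Real.exp_le_exp.2 h1
          _ = l ^ ε * Real.exp C := by rw [Real.exp_add, h2]
      have hs' : l ^ s' = l ^ (s + ε) * l ^ ε := by
        rw [← Real.rpow_add hl0]
        congr 1
        simp [hε]; ring
      have hse : l ^ (s + ε) = l ^ s * l ^ ε := Real.rpow_add hl0 s ε
      have hfin : c * (l ^ (s + ε) * l ^ ε) ≤ l ^ (s + ε) * Real.exp C := by
        calc c * (l ^ (s + ε) * l ^ ε) = c * l ^ s' := by rw [hs']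
          _ ≤ l ^ s * Real.exp (Real.log l ^ r) := key
          _ ≤ l ^ s * (l ^ ε * Real.exp C) :=
              mul_le_mul_of_nonneg_left hexpb (Real.rpow_pos_of_pos hl0 s).le
          _ = l ^ (s + ε) * Real.exp C := by rw [hse]; ring
      have hsp : (0 : ℝ) < l ^ (s + ε) := Real.rpow_pos_of_pos hl0 _
      have hcl : c * l ^ ε ≤ Real.exp C := by
        have := hfin
        rw [show c * (l ^ (s + ε) * l ^ ε) = l ^ (s + ε) * (c * l ^ ε) by ring] at this
        exact le_of_mul_le_mul_left this hsp
      rw [hlε, hL] at hcl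
      have : c * (Real.exp C / c + 1) = Real.exp C + c := by field_simp
      rw [this] at hcl
      linarith
    have hbdd : BddAbove S := ⟨s, fun x hx => hub x hx⟩
    exact le_antisymm (csSup_le ⟨s, hmem⟩ hub) (le_csSup hbdd hmem)
  · -- sigma1 = s
    set S := {s' : ℝ | ∃ c : ℝ, 0 < c ∧ ∀ t : ℝ, 1 ≤ t → ∀ l : ℝ, 1 ≤ l →
      α (l * t) / α t ≤ c * l ^ s'} with hS
    have hlb : ∀ s' ∈ S, s ≤ s' := by
      rintro s' ⟨c, hc, h⟩
      by_contra hcon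
      push_neg at hcon
      set ε : ℝ := s - s' with hε
      have hε0 : 0 < ε := by rw [hε]; linarith
      set l : ℝ := (c + 1) ^ ε⁻¹ with hl
      have hc1 : (1 : ℝ) ≤ c + 1 := by linarith
      have hl1 : 1 ≤ l := Real.one_le_rpow hc1 (by positivity)
      have hl0 : (0 : ℝ) < l := zero_lt_one.trans_le hl1
      have hlε : l ^ ε = c + 1 := by
        rw [hl, ← Real.rpow_mul (by linarith : (0:ℝ) ≤ c + 1),
          inv_mul_cancel₀ hε0.ne', Real.rpow_one]
      have hα1 : α 1 = 1 := by
        simp [hα, Real.one_rpow, Real.log_one, Real.zero_rpow hr0.ne']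
      have hratio : α (l * 1) / α 1 = l ^ s * Real.exp (Real.log l ^ r) := by
        rw [mul_one, hα1, div_one]
      have key := h 1 le_rfl l hl1
      rw [hratio] at key
      have hexp1 : (1 : ℝ) ≤ Real.exp (Real.log l ^ r) :=
        Real.one_le_exp (Real.rpow_nonneg (Real.log_nonneg hl1) r)
      have hlow : l ^ s ≤ l ^ s * Real.exp (Real.log l ^ r) := by
        nlinarith [Real.rpow_pos_of_pos hl0 s]
      have hs : l ^ s = l ^ s' * l ^ ε := by
        rw [← Real.rpow_add hl0]; congr 1; simp [hε]
      have hfin : l ^ s' * l ^ ε ≤ c * l ^ s' := by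
        calc l ^ s' * l ^ ε = l ^ s := hs.symm
          _ ≤ l ^ s * Real.exp (Real.log l ^ r) := hlow
          _ ≤ c * l ^ s' := key
      have hsp : (0 : ℝ) < l ^ s' := Real.rpow_pos_of_pos hl0 _
      have : l ^ ε ≤ c := by
        rw [show l ^ s' * l ^ ε = l ^ s' * l ^ ε by ring,
          show c * l ^ s' = l ^ s' * c by ring] at hfin
        exact le_of_mul_le_mul_left hfin hsp
      rw [hlε] at this
      linarith
    have hmem : ∀ ε : ℝ, 0 < ε → s + ε ∈ S := by
      intro ε hε0
      obtain hlin := my_rpow_le_linear hr0 hr1 hε0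
      set C : ℝ := (ε ^ (-(1 - r)⁻¹)) ^ r with hC
      refine ⟨Real.exp C, Real.exp_pos _, fun t ht l hl => ?_⟩
      have hl0 : (0 : ℝ) < l := zero_lt_one.trans_le hl
      have hup := my_ratio_upper s hr0 hr1 ht hl
      have hexpb : Real.exp (Real.log l ^ r) ≤ l ^ ε * Real.exp C := by
        have h1 : Real.log l ^ r ≤ ε * Real.log l + C := hlin _ (Real.log_nonneg hl)
        have h2 : l ^ ε = Real.exp (ε * Real.log l) := by
          rw [Real.rpow_def_of_pos hl0, mul_comm]
        calc Real.exp (Real.log l ^ r) ≤ Real.exp (ε * Real.log l + C) :=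
              Real.exp_le_exp.2 h1
          _ = l ^ ε * Real.exp C := by rw [Real.exp_add, h2]
      calc α (l * t) / α t ≤ l ^ s * Real.exp (Real.log l ^ r) := hup
        _ ≤ l ^ s * (l ^ ε * Real.exp C) :=
            mul_le_mul_of_nonneg_left hexpb (Real.rpow_pos_of_pos hl0 s).le
        _ = Real.exp C * l ^ (s + ε) := by rw [Real.rpow_add hl0]; ring
    have hbdd : BddBelow S := ⟨s, fun x hx => hlb x hx⟩
    have hne : S.Nonempty := ⟨s + 1, hmem 1 one_pos⟩
    refine le_antisymm ?_ (le_csInf hne hlb)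
    refine le_of_forall_pos_le_add fun ε hε => ?_
    exact csInf_le hbdd (hmem ε hε)
end

section
/- Fix θ ∈ ℝ and δ > 0, and define α(t) := t^{θ + δ sin(ln ln t)} for t > e and α(t) := t^θ for 1 ≤ t ≤ e. Then α belongs to the class RO, with Matuszewska indices σ₀(α) = θ − √2 δ and σ₁(α) = θ + √2 δ. -/
/-- The function `α t = t^{θ + δ sin (ln ln t)}` for `t > e`, and `α t = t^θ` for
`1 ≤ t ≤ e`. -/
noncomputable def alphaSin (θ δ : ℝ) (t : ℝ) : ℝ :=
  if Real.exp 1 < t then t ^ (θ + δ * Real.sin (Real.log (Real.log t))) else t ^ θ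

/-!
In the variable `u = log t` we have `alphaSin θ δ = exp ∘ G ∘ log` with
`G u = θ u + δ u sin (log u)` for `u ≥ 1`, so `log (α (λ t) / α t)` is an increment of `G` over
an interval of length `log λ`. For `u > 1`, `G' u = θ + δ (sin + cos) (log u)` lies in
`[θ - √2 δ, θ + √2 δ]`, which bounds the increments by these slopes: this gives the RO property
and the bounds `c λ^s` with `c = 1` and `s = θ ∓ √2 δ`. Conversely, `G'` stays close to
`θ ± √2 δ` on the intervals `[e^(x + 2πn), e^(x + 2πn + ε)]` for suitable `x`, whose lengths grow
like `e^(2πn)`, so no bound `c λ^s` with a better exponent can hold.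
-/

open Real Set Filter

lemma le_of_increment_le_of_long_increments {G : ℝ → ℝ} {C s Q : ℝ}
    (hG : ∀ u v, 0 ≤ u → 0 ≤ v → G (u + v) - G u ≤ C + s * v)
    (hlong : ∀ q < Q, ∀ L, ∃ a v, 0 ≤ a ∧ L ≤ v ∧ q * v ≤ G (a + v) - G a) : Q ≤ s := by
  by_contra! hQ
  obtain ⟨q, hsq, hqQ⟩ := exists_between hQ
  obtain ⟨a, v, ha, hv, hinc⟩ := hlong q hqQ (max 0 (C / (q - s)) + 1)
  have hCv : C / (q - s) < v := by linarith [le_max_right 0 (C / (q - s))]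
  rw [div_lt_iff₀ (sub_pos.2 hsq)] at hCv
  linarith [hG a v ha (by linarith [le_max_left 0 (C / (q - s))])]

lemma isRO_of_rpow_le_div_le_rpow {α : ℝ → ℝ} {s₀ s₁ : ℝ}
    (hmeas : Measurable fun t : Ici (1 : ℝ) => α t.1) (hpos : ∀ t, 1 ≤ t → 0 < α t)
    (hbound : ∀ t, 1 ≤ t → ∀ l, 1 ≤ l → l ^ s₀ ≤ α (l * t) / α t ∧ α (l * t) / α t ≤ l ^ s₁) :
    IsRO α := by
  set K := max |s₀| |s₁|
  refine ⟨hmeas, hpos, 2, one_lt_two, 2 ^ K, one_le_rpow one_le_two (by positivity),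
    fun t ht l hl hl2 => ?_⟩
  have hlK : l ^ K ≤ 2 ^ K := rpow_le_rpow (by linarith) hl2 (by positivity)
  obtain ⟨h₀, h₁⟩ := hbound t ht l hl
  constructor
  · calc (2 ^ K)⁻¹ ≤ (l ^ K)⁻¹ := inv_anti₀ (by positivity) hlK
      _ = l ^ (-K) := (rpow_neg (by linarith) K).symm
      _ ≤ l ^ s₀ := rpow_le_rpow_of_exponent_le hl
        (by linarith [neg_abs_le s₀, le_max_left |s₀| |s₁|])
      _ ≤ _ := h₀
  · calc _ ≤ l ^ s₁ := h₁
      _ ≤ l ^ K := rpow_le_rpow_of_exponent_le hl ((le_abs_self s₁).trans (le_max_right _ _))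
      _ ≤ 2 ^ K := hlK

lemma abs_sin_add_cos_le (x : ℝ) : |sin x + cos x| ≤ √2 :=
  abs_le_sqrt (by nlinarith [sin_sq_add_cos_sq x, sq_nonneg (sin x - cos x)])

lemma neg_sqrt_two_mul_abs_le (δ x : ℝ) : -(√2 * |δ|) ≤ δ * (sin x + cos x) := by
  have h : |δ * (sin x + cos x)| ≤ √2 * |δ| := by
    rw [abs_mul, mul_comm]
    exact mul_le_mul_of_nonneg_right (abs_sin_add_cos_le x) (abs_nonneg δ)
  exact (abs_le.1 h).1

lemma sin_add_cos_pi_div_four : sin (π / 4) + cos (π / 4) = √2 := by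
  rw [sin_pi_div_four, cos_pi_div_four]; ring

lemma sin_add_cos_pi_div_four_add_pi : sin (π / 4 + π) + cos (π / 4 + π) = -√2 := by
  rw [sin_add_pi, cos_add_pi, ← sin_add_cos_pi_div_four]; ring

/-- `log ∘ alphaSin θ δ ∘ exp` on `[0, ∞)`. The `max` makes it continuous, with a corner at
`u = 1`. -/
noncomputable def logAlphaSinExp (θ δ u : ℝ) : ℝ :=
  θ * u + δ * u * sin (log (max u 1))

section logAlphaSinExp

variable (θ δ : ℝ)

lemma logAlphaSinExp_of_le_one {u : ℝ} (hu : u ≤ 1) : logAlphaSinExp θ δ u = θ * u := by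
  simp [logAlphaSinExp, max_eq_right hu]

lemma logAlphaSinExp_neg (u : ℝ) : logAlphaSinExp (-θ) (-δ) u = -logAlphaSinExp θ δ u := by
  simp only [logAlphaSinExp]; ring

lemma continuous_logAlphaSinExp : Continuous (logAlphaSinExp θ δ) := by
  have hlog : Continuous fun u : ℝ => log (max u 1) :=
    (continuous_id.max continuous_const).log fun u => by positivity
  unfold logAlphaSinExp
  fun_prop

lemma hasDerivAt_logAlphaSinExp {u : ℝ} (hu : 1 < u) :
    HasDerivAt (logAlphaSinExp θ δ) (θ + δ * (sin (log u) + cos (log u))) u := by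
  have hu0 : u ≠ 0 := by positivity
  have h : HasDerivAt (fun x => θ * x + δ * x * sin (log x))
      (θ * 1 + (δ * 1 * sin (log u) + δ * u * (cos (log u) * u⁻¹))) u :=
    ((hasDerivAt_id u).const_mul θ).add
      (((hasDerivAt_id u).const_mul δ).mul ((hasDerivAt_log hu0).sin))
  refine (h.congr_of_eventuallyEq ?_).congr_deriv (by field_simp)
  filter_upwards [Ioi_mem_nhds hu] with x (hx : 1 < x)
  simp [logAlphaSinExp, max_eq_left hx.le]

lemma mul_sub_le_logAlphaSinExp_sub {u w : ℝ} (hu : 0 ≤ u) (huw : u ≤ w) :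
    (θ - √2 * |δ|) * (w - u) ≤ logAlphaSinExp θ δ w - logAlphaSinExp θ δ u := by
  set C := θ - √2 * |δ|
  suffices MonotoneOn (fun x => logAlphaSinExp θ δ x - C * x) (Ici 0) by
    linarith [this hu (hu.trans huw) huw]
  rw [← Icc_union_Ici_eq_Ici zero_le_one]
  refine MonotoneOn.union_right ?_ ?_ (isGreatest_Icc zero_le_one) isLeast_Ici
  · intro x hx y hy hxy
    simp only [logAlphaSinExp_of_le_one θ δ hx.2, logAlphaSinExp_of_le_one θ δ hy.2]
    nlinarith [mul_nonneg (sqrt_nonneg 2) (abs_nonneg δ)]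
  · have hderiv : ∀ x ∈ interior (Ici (1 : ℝ)),
        HasDerivAt (fun x => logAlphaSinExp θ δ x - C * x)
          (θ + δ * (sin (log x) + cos (log x)) - C * 1) x := fun x hx =>
      (hasDerivAt_logAlphaSinExp θ δ (by simpa using hx)).sub ((hasDerivAt_id x).const_mul C)
    refine monotoneOn_of_deriv_nonneg (convex_Ici 1)
      ((continuous_logAlphaSinExp θ δ).sub (by fun_prop)).continuousOn
      (fun x hx => (hderiv x hx).differentiableAt.differentiableWithinAt) fun x hx => ?_
    rw [(hderiv x hx).deriv]
    linarith [neg_sqrt_two_mul_abs_le δ (log x)]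

lemma exists_long_logAlphaSinExp_increment {q x₀ : ℝ} (hq : q < θ + δ * (sin x₀ + cos x₀))
    (L : ℝ) :
    ∃ a v, 0 ≤ a ∧ L ≤ v ∧ q * v ≤ logAlphaSinExp θ δ (a + v) - logAlphaSinExp θ δ a := by
  -- `G' u` is close to `θ + δ (sin x₀ + cos x₀)` when `log u` is close to `x₀ + 2πn`
  obtain ⟨ε, hε, hball⟩ := Metric.eventually_nhds_iff.1 <|
    (show Continuous fun x => θ + δ * (sin x + cos x) by fun_prop).continuousAt.eventually
      (lt_mem_nhds hq)
  have hy : Tendsto (fun n : ℕ => x₀ + n * (2 * π)) atTop atTop :=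
    tendsto_atTop_add_const_left _ _ (tendsto_natCast_atTop_atTop.atTop_mul_const two_pi_pos)
  have hlen : Tendsto (fun n : ℕ => exp (x₀ + n * (2 * π)) * (exp ε - 1)) atTop atTop :=
    (tendsto_exp_atTop.comp hy).atTop_mul_const (by linarith [add_one_lt_exp hε.ne'])
  obtain ⟨n, hn0, hnL⟩ := ((hy.eventually_ge_atTop 1).and (hlen.eventually_ge_atTop L)).exists
  set y := x₀ + n * (2 * π)
  refine ⟨exp y, exp y * (exp ε - 1), (exp_pos y).le, hnL, ?_⟩
  have hb : exp y + exp y * (exp ε - 1) = exp (y + ε) := by rw [exp_add y ε]; ring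
  have hsub : exp y * (exp ε - 1) = exp (y + ε) - exp y := by linarith
  rw [hb, hsub]
  have hderiv : ∀ x ∈ Ioo (exp y) (exp (y + ε)),
      HasDerivAt (logAlphaSinExp θ δ) (θ + δ * (sin (log x) + cos (log x))) x := fun x hx =>
    hasDerivAt_logAlphaSinExp θ δ (lt_trans (one_lt_exp_iff.2 (by linarith)) hx.1)
  refine (convex_Icc _ _).mul_sub_le_image_sub_of_le_deriv
    (continuous_logAlphaSinExp θ δ).continuousOn
    (fun x hx => (hderiv x (by simpa using hx)).differentiableAt.differentiableWithinAt)
    (fun x hx => ?_) _ (left_mem_Icc.2 (exp_le_exp.2 (by linarith)))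
    _ (right_mem_Icc.2 (exp_le_exp.2 (by linarith))) (exp_le_exp.2 (by linarith))
  rw [interior_Icc] at hx
  rw [(hderiv x hx).deriv, ← sin_sub_nat_mul_two_pi, ← cos_sub_nat_mul_two_pi]
  have hx0 : 0 < x := (exp_pos y).trans hx.1
  have h1 : y < log x := by rw [lt_log_iff_exp_lt hx0]; exact hx.1
  have h2 : log x < y + ε := by rw [log_lt_iff_lt_exp hx0]; exact hx.2
  refine (hball ?_).le
  rw [Real.dist_eq, abs_lt]
  constructor <;> linarith

end logAlphaSinExp

section alphaSin

variable (θ δ : ℝ)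

lemma measurable_alphaSin : Measurable (alphaSin θ δ) :=
  Measurable.ite measurableSet_Ioi (by fun_prop) (by fun_prop)

lemma alphaSin_eq_exp {t : ℝ} (ht : 1 ≤ t) :
    alphaSin θ δ t = exp (logAlphaSinExp θ δ (log t)) := by
  have ht0 : 0 < t := by linarith
  rw [alphaSin, rpow_def_of_pos ht0, rpow_def_of_pos ht0]
  split_ifs with h
  · have hlog : 1 < log t := by rwa [lt_log_iff_exp_lt ht0]
    rw [logAlphaSinExp, max_eq_left hlog.le]
    ring_nf
  · rw [logAlphaSinExp_of_le_one θ δ (by rw [log_le_iff_le_exp ht0]; linarith), mul_comm]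

lemma alphaSin_div_alphaSin {t l : ℝ} (ht : 1 ≤ t) (hl : 1 ≤ l) :
    alphaSin θ δ (l * t) / alphaSin θ δ t
      = exp (logAlphaSinExp θ δ (log t + log l) - logAlphaSinExp θ δ (log t)) := by
  rw [alphaSin_eq_exp θ δ (one_le_mul_of_one_le_of_one_le hl ht), alphaSin_eq_exp θ δ ht,
    ← exp_sub, log_mul (by positivity) (by positivity), add_comm]

lemma rpow_le_alphaSin_div_le_rpow {t l : ℝ} (ht : 1 ≤ t) (hl : 1 ≤ l) :
    l ^ (θ - √2 * |δ|) ≤ alphaSin θ δ (l * t) / alphaSin θ δ t ∧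
      alphaSin θ δ (l * t) / alphaSin θ δ t ≤ l ^ (θ + √2 * |δ|) := by
  have hlt : log t ≤ log t + log l := le_add_of_nonneg_right (log_nonneg hl)
  have hlow := mul_sub_le_logAlphaSinExp_sub θ δ (log_nonneg ht) hlt
  have hupp := mul_sub_le_logAlphaSinExp_sub (-θ) (-δ) (log_nonneg ht) hlt
  simp only [logAlphaSinExp_neg, abs_neg, add_sub_cancel_left] at hlow hupp
  rw [alphaSin_div_alphaSin θ δ ht hl, rpow_def_of_pos (by positivity),
    rpow_def_of_pos (by positivity), exp_le_exp, exp_le_exp]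
  constructor <;> linarith

lemma alphaSin_exp_div_alphaSin_exp {u v : ℝ} (hu : 0 ≤ u) (hv : 0 ≤ v) :
    alphaSin θ δ (exp v * exp u) / alphaSin θ δ (exp u)
      = exp (logAlphaSinExp θ δ (u + v) - logAlphaSinExp θ δ u) := by
  rw [alphaSin_div_alphaSin θ δ (one_le_exp hu) (one_le_exp hv), log_exp, log_exp]

lemma le_of_alphaSin_div_le_mul_rpow {s c : ℝ} (hc : 0 < c)
    (H : ∀ t, 1 ≤ t → ∀ l, 1 ≤ l → alphaSin θ δ (l * t) / alphaSin θ δ t ≤ c * l ^ s) :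
    θ + √2 * δ ≤ s := by
  refine le_of_increment_le_of_long_increments (C := log c) (fun u v hu hv => ?_)
    fun q hq => exists_long_logAlphaSinExp_increment θ δ (x₀ := π / 4)
      (by rwa [sin_add_cos_pi_div_four, mul_comm])
  have h := H (exp u) (one_le_exp hu) (exp v) (one_le_exp hv)
  rw [alphaSin_exp_div_alphaSin_exp θ δ hu hv, rpow_def_of_pos (exp_pos v), log_exp,
    ← exp_log hc, ← exp_add, exp_le_exp] at h
  linarith

lemma le_of_mul_rpow_le_alphaSin_div {s c : ℝ} (hc : 0 < c)
    (H : ∀ t, 1 ≤ t → ∀ l, 1 ≤ l → c * l ^ s ≤ alphaSin θ δ (l * t) / alphaSin θ δ t) :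
    s ≤ θ - √2 * δ := by
  -- bounds from below on the increments of `G` are bounds from above on those of `-G`
  have key : -θ + √2 * δ ≤ -s := by
    refine le_of_increment_le_of_long_increments (G := logAlphaSinExp (-θ) (-δ)) (C := -log c)
      (fun u v hu hv => ?_) fun q hq => exists_long_logAlphaSinExp_increment (-θ) (-δ)
        (x₀ := π / 4 + π) (by rw [sin_add_cos_pi_div_four_add_pi]; linarith)
    have h := H (exp u) (one_le_exp hu) (exp v) (one_le_exp hv)
    rw [alphaSin_exp_div_alphaSin_exp θ δ hu hv, rpow_def_of_pos (exp_pos v), log_exp,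
      ← exp_log hc, ← exp_add, exp_le_exp] at h
    simp only [logAlphaSinExp_neg]
    linarith
  linarith

end alphaSin

/-- The function `t^{θ + δ sin(ln ln t)}` belongs to RO with Matuszewska indices
`σ₀ = θ - √2 δ` and `σ₁ = θ + √2 δ`. -/
theorem stmt7 (θ δ : ℝ) (hδ : 0 < δ) :
    IsRO (alphaSin θ δ) ∧
      sigma0 (alphaSin θ δ) = θ - Real.sqrt 2 * δ ∧
      sigma1 (alphaSin θ δ) = θ + Real.sqrt 2 * δ := by
  have hbound : ∀ t, 1 ≤ t → ∀ l, 1 ≤ l →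
      l ^ (θ - √2 * δ) ≤ alphaSin θ δ (l * t) / alphaSin θ δ t ∧
        alphaSin θ δ (l * t) / alphaSin θ δ t ≤ l ^ (θ + √2 * δ) := by
    simpa only [abs_of_pos hδ] using fun t ht l hl => rpow_le_alphaSin_div_le_rpow θ δ ht hl
  refine ⟨isRO_of_rpow_le_div_le_rpow ((measurable_alphaSin θ δ).comp measurable_subtype_coe)
    (fun t ht => by rw [alphaSin_eq_exp θ δ ht]; exact exp_pos _) hbound, ?_, ?_⟩
  · refine IsGreatest.csSup_eq ⟨⟨1, one_pos, fun t ht l hl => ?_⟩, fun s ⟨c, hc, H⟩ => ?_⟩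
    · rw [one_mul]; exact (hbound t ht l hl).1
    · exact le_of_mul_rpow_le_alphaSin_div θ δ hc H
  · refine IsLeast.csInf_eq ⟨⟨1, one_pos, fun t ht l hl => ?_⟩, fun s ⟨c, hc, H⟩ => ?_⟩
    · rw [one_mul]; exact (hbound t ht l hl).2
    · exact le_of_alphaSin_div_le_mul_rpow θ δ hc H
end

section
/- Fix θ ∈ ℝ, δ > 0, and r ∈ (0,1), and define α(t) := t^{θ + δ sin((ln ln t)^r)} for t > e and α(t) := t^θ for 1 ≤ t ≤ e. Then α belongs to RO with σ₀(α) = θ − δ and σ₁(α) = θ + δ. -/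
/-- The function `α t = t^{θ + δ sin((ln ln t)^r)}` for `t > e`, and `α t = t^θ` for
`1 ≤ t ≤ e`. -/
noncomputable def alphaSinPow (θ δ r : ℝ) (t : ℝ) : ℝ :=
  if Real.exp 1 < t then t ^ (θ + δ * Real.sin (Real.log (Real.log t) ^ r)) else t ^ θ

open Real

namespace Stmt8Aux

noncomputable def beta (θ δ r t : ℝ) : ℝ :=
  if Real.exp 1 < t then θ + δ * Real.sin (Real.log (Real.log t) ^ r) else θ

lemma alpha_eq (θ δ r t : ℝ) : alphaSinPow θ δ r t = t ^ beta θ δ r t := by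
  unfold alphaSinPow beta; split_ifs <;> rfl

lemma le_beta (θ : ℝ) {δ : ℝ} (hδ : 0 < δ) (r t : ℝ) : θ - δ ≤ beta θ δ r t := by
  unfold beta; split_ifs with h
  · nlinarith [Real.neg_one_le_sin (Real.log (Real.log t) ^ r)]
  · linarith

lemma beta_le (θ : ℝ) {δ : ℝ} (hδ : 0 < δ) (r t : ℝ) : beta θ δ r t ≤ θ + δ := by
  unfold beta; split_ifs with h
  · nlinarith [Real.sin_le_one (Real.log (Real.log t) ^ r)]
  · linarith

lemma abs_sin_sub_sin (x y : ℝ) : |Real.sin x - Real.sin y| ≤ |x - y| := by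
  rw [Real.sin_sub_sin]
  have h1 : |Real.sin ((x - y) / 2)| ≤ |(x - y) / 2| := Real.abs_sin_le_abs
  have h2 : |Real.cos ((x + y) / 2)| ≤ 1 := Real.abs_cos_le_one _
  have h3 : (0:ℝ) ≤ |Real.sin ((x - y) / 2)| := abs_nonneg _
  have h4 : (0:ℝ) ≤ |(x - y) / 2| := abs_nonneg _
  calc |2 * Real.sin ((x - y) / 2) * Real.cos ((x + y) / 2)|
      = 2 * |Real.sin ((x - y) / 2)| * |Real.cos ((x + y) / 2)| := by
        rw [abs_mul, abs_mul, abs_two]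
    _ ≤ 2 * |(x - y) / 2| * 1 := by nlinarith
    _ = |x - y| := by rw [abs_div, abs_two]; ring

end Stmt8Aux

namespace Stmt8Aux

lemma key {θ δ r : ℝ} (hδ : 0 < δ) (hr0 : 0 < r) (hr1 : r < 1) {ε : ℝ} (hε : 0 < ε) :
    ∃ c : ℝ, 1 ≤ c ∧ ∀ t l : ℝ, 1 ≤ t → 1 ≤ l →
      |beta θ δ r (l * t) - beta θ δ r t| * Real.log t ≤ Real.log c + ε * Real.log l := by
  set w0 : ℝ := max 1 ((δ / ε) ^ (1 - r)⁻¹) with hw0def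
  have hw01 : (1:ℝ) ≤ w0 := le_max_left _ _
  set T : ℝ := Real.exp (Real.exp w0) with hTdef
  have hT1 : (1:ℝ) ≤ T := Real.one_le_exp (Real.exp_pos _).le
  refine ⟨T ^ (2 * δ), Real.one_le_rpow hT1 (by positivity), ?_⟩
  have hlogc : Real.log (T ^ (2 * δ)) = 2 * δ * Real.exp w0 := by
    rw [Real.log_rpow (by positivity), hTdef, Real.log_exp]
  intro t l ht hl
  have ht0 : (0:ℝ) < t := by linarith
  have hl0 : (0:ℝ) < l := by linarith
  have hlt1 : t ≤ l * t := le_mul_of_one_le_left ht0.le hl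
  have hll0 : (0:ℝ) ≤ Real.log l := Real.log_nonneg hl
  rw [hlogc]
  by_cases hcase : t ≤ T
  · have h1 : |beta θ δ r (l * t) - beta θ δ r t| ≤ 2 * δ := by
      have a1 := le_beta θ hδ r (l * t); have a2 := beta_le θ hδ r (l * t)
      have a3 := le_beta θ hδ r t; have a4 := beta_le θ hδ r t
      rw [abs_le]; constructor <;> linarith
    have h2 : Real.log t ≤ Real.exp w0 := by
      calc Real.log t ≤ Real.log T := Real.log_le_log ht0 hcase
        _ = Real.exp w0 := by rw [hTdef, Real.log_exp]
    have h3 : (0:ℝ) ≤ Real.log t := Real.log_nonneg ht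
    nlinarith [abs_nonneg (beta θ δ r (l * t) - beta θ δ r t),
      mul_nonneg hε.le hll0]
  · push_neg at hcase
    have hew0 : (1:ℝ) < Real.exp w0 := by
      calc (1:ℝ) = Real.exp 0 := (Real.exp_zero).symm
        _ < Real.exp w0 := Real.exp_lt_exp.2 (by linarith)
    have he_t : Real.exp 1 < t := by
      calc Real.exp 1 ≤ Real.exp (Real.exp w0) := Real.exp_le_exp.2 hew0.le
        _ < t := hcase
    have he_lt : Real.exp 1 < l * t := lt_of_lt_of_le he_t hlt1
    set u : ℝ := Real.log t with hu_def
    set u' : ℝ := Real.log (l * t) with hu'_def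
    have hu : Real.exp w0 < u := by
      have := Real.log_lt_log (Real.exp_pos _) hcase
      rwa [Real.log_exp] at this
    have hu1 : (1:ℝ) < u := lt_trans hew0 hu
    have hu0 : (0:ℝ) < u := by linarith
    have huu' : u ≤ u' := Real.log_le_log ht0 hlt1
    have hu'l : u' = Real.log l + u := by rw [hu'_def, Real.log_mul (by linarith) (by linarith)]
    set w : ℝ := Real.log u with hw_def
    set w' : ℝ := Real.log u' with hw'_def
    have hw : w0 < w := by
      have := Real.log_lt_log (Real.exp_pos w0) hu
      rwa [Real.log_exp] at this
    have hw1 : (1:ℝ) ≤ w := le_trans hw01 hw.le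
    have hwpos : (0:ℝ) < w := by linarith
    have hww' : w ≤ w' := Real.log_le_log hu0 huu'
    -- beta values
    have hbt : beta θ δ r t = θ + δ * Real.sin (w ^ r) := by
      rw [beta, if_pos he_t]
    have hblt : beta θ δ r (l * t) = θ + δ * Real.sin (w' ^ r) := by
      rw [beta, if_pos he_lt]
    have hwr : w ^ r ≤ w' ^ r := Real.rpow_le_rpow hwpos.le hww' hr0.le
    have h1 : |beta θ δ r (l * t) - beta θ δ r t| ≤ δ * (w' ^ r - w ^ r) := by
      rw [hblt, hbt]
      have : θ + δ * Real.sin (w' ^ r) - (θ + δ * Real.sin (w ^ r))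
          = δ * (Real.sin (w' ^ r) - Real.sin (w ^ r)) := by ring
      rw [this, abs_mul, abs_of_pos hδ]
      have h2 := abs_sin_sub_sin (w' ^ r) (w ^ r)
      rw [abs_of_nonneg (by linarith : (0:ℝ) ≤ w' ^ r - w ^ r)] at h2
      exact mul_le_mul_of_nonneg_left h2 hδ.le
    -- w'^r - w^r ≤ w^(r-1) * (w' - w)
    have h2 : w' ^ r - w ^ r ≤ w ^ (r - 1) * (w' - w) := by
      have hx1 : (1:ℝ) ≤ w' / w := (one_le_div hwpos).2 hww'
      have hxr : (w' / w) ^ r ≤ w' / w := by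
        calc (w' / w) ^ r ≤ (w' / w) ^ (1:ℝ) := Real.rpow_le_rpow_of_exponent_le hx1 hr1.le
          _ = w' / w := Real.rpow_one _
      have hmul : w ^ r * (w' / w) ^ r = w' ^ r := by
        rw [← Real.mul_rpow hwpos.le (by positivity), mul_div_cancel₀ _ hwpos.ne']
      have hrsub : w ^ (r - 1) = w ^ r / w := by
        rw [Real.rpow_sub hwpos, Real.rpow_one]
      have hwr0 : (0:ℝ) ≤ w ^ r := Real.rpow_nonneg hwpos.le r
      calc w' ^ r - w ^ r = w ^ r * ((w' / w) ^ r - 1) := by rw [mul_sub, hmul, mul_one]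
        _ ≤ w ^ r * (w' / w - 1) := mul_le_mul_of_nonneg_left (by linarith) hwr0
        _ = w ^ (r - 1) * (w' - w) := by rw [hrsub]; field_simp
    -- w' - w ≤ log l / u
    have h3 : w' - w ≤ Real.log l / u := by
      have hlog : w' - w = Real.log (u' / u) := by
        rw [hw'_def, hw_def, Real.log_div (by linarith) hu0.ne']
      rw [hlog]
      have := Real.log_le_sub_one_of_pos (show (0:ℝ) < u' / u from div_pos (by linarith) hu0)
      have heq : u' / u - 1 = Real.log l / u := by
        rw [eq_div_iff hu0.ne', sub_mul, div_mul_cancel₀ _ hu0.ne', hu'l]; ring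
      linarith [heq ▸ this]
    -- w^(r-1) * δ ≤ ε
    have h4 : δ * w ^ (r - 1) ≤ ε := by
      have h1r : (0:ℝ) < 1 - r := by linarith
      have hwd : δ / ε ≤ w ^ (1 - r) := by
        calc δ / ε = ((δ / ε) ^ (1 - r)⁻¹) ^ (1 - r) :=
              (Real.rpow_inv_rpow (by positivity) h1r.ne').symm
          _ ≤ w0 ^ (1 - r) :=
              Real.rpow_le_rpow (Real.rpow_nonneg (by positivity) _) (le_max_right _ _) h1r.le
          _ ≤ w ^ (1 - r) := Real.rpow_le_rpow (by linarith) hw.le h1r.le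
      have hpos : (0:ℝ) < w ^ (1 - r) := Real.rpow_pos_of_pos hwpos _
      have hinv : w ^ (r - 1) = (w ^ (1 - r))⁻¹ := by
        rw [← Real.rpow_neg hwpos.le]; norm_num
      rw [hinv, mul_inv_le_iff₀ hpos]
      calc δ = (δ / ε) * ε := by field_simp
        _ ≤ w ^ (1 - r) * ε := mul_le_mul_of_nonneg_right hwd hε.le
        _ = ε * w ^ (1 - r) := mul_comm _ _
    -- combine
    have hwrm1 : (0:ℝ) ≤ w ^ (r - 1) := Real.rpow_nonneg hwpos.le _
    have hchain : |beta θ δ r (l * t) - beta θ δ r t| ≤ δ * (w ^ (r - 1) * (Real.log l / u)) := by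
      calc |beta θ δ r (l * t) - beta θ δ r t| ≤ δ * (w' ^ r - w ^ r) := h1
        _ ≤ δ * (w ^ (r - 1) * (w' - w)) := mul_le_mul_of_nonneg_left h2 hδ.le
        _ ≤ δ * (w ^ (r - 1) * (Real.log l / u)) := by
            apply mul_le_mul_of_nonneg_left (mul_le_mul_of_nonneg_left h3 hwrm1) hδ.le
    calc |beta θ δ r (l * t) - beta θ δ r t| * Real.log t
        ≤ (δ * (w ^ (r - 1) * (Real.log l / u))) * u :=
          mul_le_mul_of_nonneg_right hchain (by linarith) |>.trans
            (le_of_eq rfl)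
      _ = (δ * w ^ (r - 1)) * Real.log l := by field_simp
      _ ≤ ε * Real.log l := mul_le_mul_of_nonneg_right h4 hll0
      _ ≤ 2 * δ * Real.exp w0 + ε * Real.log l := by nlinarith [Real.exp_pos w0]

end Stmt8Aux

namespace Stmt8Aux

lemma ratio_exp (θ δ r : ℝ) {t l : ℝ} (ht : 1 ≤ t) (hl : 1 ≤ l) :
    alphaSinPow θ δ r (l * t) / alphaSinPow θ δ r t =
      Real.exp (beta θ δ r (l * t) * Real.log l +
        (beta θ δ r (l * t) - beta θ δ r t) * Real.log t) := by
  have ht0 : (0:ℝ) < t := by linarith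
  have hl0 : (0:ℝ) < l := by linarith
  rw [alpha_eq, alpha_eq, Real.rpow_def_of_pos (by positivity), Real.rpow_def_of_pos ht0,
    ← Real.exp_sub]
  congr 1
  rw [Real.log_mul hl0.ne' ht0.ne']
  ring

lemma rpow_exp {l : ℝ} (hl0 : 0 < l) (s : ℝ) : l ^ s = Real.exp (s * Real.log l) := by
  rw [Real.rpow_def_of_pos hl0, mul_comm]

lemma ratio_bounds (θ : ℝ) {δ r : ℝ} (hδ : 0 < δ) (hr0 : 0 < r) (hr1 : r < 1)
    {ε : ℝ} (hε : 0 < ε) :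
    ∃ c : ℝ, 1 ≤ c ∧ ∀ t l : ℝ, 1 ≤ t → 1 ≤ l →
      c⁻¹ * l ^ (θ - δ - ε) ≤ alphaSinPow θ δ r (l * t) / alphaSinPow θ δ r t ∧
      alphaSinPow θ δ r (l * t) / alphaSinPow θ δ r t ≤ c * l ^ (θ + δ + ε) := by
  obtain ⟨c, hc1, hc⟩ := key (θ := θ) hδ hr0 hr1 hε
  have hc0 : (0:ℝ) < c := lt_of_lt_of_le one_pos hc1
  refine ⟨c, hc1, fun t l ht hl => ?_⟩
  have ht0 : (0:ℝ) < t := by linarith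
  have hl0 : (0:ℝ) < l := by linarith
  have hll0 : (0:ℝ) ≤ Real.log l := Real.log_nonneg hl
  have hlt0 : (0:ℝ) ≤ Real.log t := Real.log_nonneg ht
  have hKey := hc t l ht hl
  set Δ : ℝ := beta θ δ r (l * t) - beta θ δ r t with hΔdef
  have habs : |Δ * Real.log t| = |Δ| * Real.log t := by
    rw [abs_mul, abs_of_nonneg hlt0]
  have hup : Δ * Real.log t ≤ Real.log c + ε * Real.log l := by
    have := le_abs_self (Δ * Real.log t); rw [habs] at this; linarith
  have hdown : -(Real.log c + ε * Real.log l) ≤ Δ * Real.log t := by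
    have := neg_abs_le (Δ * Real.log t); rw [habs] at this; linarith
  have hbl : (θ - δ) * Real.log l ≤ beta θ δ r (l * t) * Real.log l :=
    mul_le_mul_of_nonneg_right (le_beta θ hδ r (l * t)) hll0
  have hbu : beta θ δ r (l * t) * Real.log l ≤ (θ + δ) * Real.log l :=
    mul_le_mul_of_nonneg_right (beta_le θ hδ r (l * t)) hll0
  rw [ratio_exp θ δ r ht hl]
  constructor
  · rw [rpow_exp hl0, ← Real.exp_log (show (0:ℝ) < c⁻¹ by positivity), ← Real.exp_add]
    apply Real.exp_le_exp.2
    rw [Real.log_inv]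
    nlinarith
  · rw [rpow_exp hl0, ← Real.exp_log hc0, ← Real.exp_add]
    apply Real.exp_le_exp.2
    nlinarith

end Stmt8Aux

namespace Stmt8Aux

lemma exists_big {r : ℝ} (hr0 : 0 < r) (hr1 : r < 1) {p : ℝ} (hp : 1 ≤ p) (M : ℝ) :
    ∃ y : ℝ, M < Real.exp y ∧ 0 < y ∧ ∃ k : ℕ, y ^ r = p + (k : ℝ) * (2 * π) := by
  obtain ⟨k, hk⟩ := exists_nat_ge M
  set x : ℝ := p + (k : ℝ) * (2 * π) with hxdef
  have hpi : (1:ℝ) ≤ 2 * π := by nlinarith [Real.pi_gt_three]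
  have hkx : (k : ℝ) ≤ x := by nlinarith [Nat.cast_nonneg (α := ℝ) k]
  have hx1 : (1:ℝ) ≤ x := by nlinarith [Nat.cast_nonneg (α := ℝ) k]
  refine ⟨x ^ r⁻¹, ?_, Real.rpow_pos_of_pos (by linarith) _, k, ?_⟩
  · have hy : x ≤ x ^ r⁻¹ := by
      calc x = x ^ (1:ℝ) := (Real.rpow_one x).symm
        _ ≤ x ^ r⁻¹ := Real.rpow_le_rpow_of_exponent_le hx1 (by
            rw [le_inv_comm₀ one_pos hr0]; simpa using hr1.le)
    have := Real.add_one_le_exp (x ^ r⁻¹)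
    linarith
  · exact Real.rpow_inv_rpow (by linarith) (ne_of_gt hr0)

lemma alpha_at (θ δ : ℝ) {r y p : ℝ} (hy : 0 < y) (k : ℕ)
    (h : y ^ r = p + (k : ℝ) * (2 * π)) :
    alphaSinPow θ δ r (Real.exp (Real.exp y)) =
      Real.exp (Real.exp y) ^ (θ + δ * Real.sin p) := by
  have h1 : Real.exp 1 < Real.exp (Real.exp y) := by
    apply Real.exp_lt_exp.2
    have := Real.add_one_le_exp y; linarith
  rw [alphaSinPow, if_pos h1, Real.log_exp, Real.log_exp, h]
  have hcast : p + (k : ℝ) * (2 * π) = p + ((k : ℤ) : ℝ) * (2 * π) := by push_cast; ring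
  rw [hcast, Real.sin_add_int_mul_two_pi]

lemma alpha_one (θ δ r : ℝ) : alphaSinPow θ δ r 1 = 1 := by
  rw [alphaSinPow, if_neg, Real.one_rpow]
  push_neg
  calc (1:ℝ) ≤ Real.exp 1 := by linarith [Real.add_one_le_exp (1:ℝ)]
    _ ≤ Real.exp 1 := le_refl _

end Stmt8Aux


open Stmt8Aux

/-- For `0 < r < 1`, the function `t^{θ + δ sin((ln ln t)^r)}` belongs to RO with
Matuszewska indices `σ₀ = θ - δ` and `σ₁ = θ + δ`. -/
theorem stmt8 (θ δ r : ℝ) (hδ : 0 < δ) (hr0 : 0 < r) (hr1 : r < 1) :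
    IsRO (alphaSinPow θ δ r) ∧
      sigma0 (alphaSinPow θ δ r) = θ - δ ∧
      sigma1 (alphaSinPow θ δ r) = θ + δ := by
  have hpi2 : (1:ℝ) ≤ π / 2 := by nlinarith [Real.pi_gt_three]
  have hpos : ∀ t : ℝ, 1 ≤ t → 0 < alphaSinPow θ δ r t := by
    intro t ht
    rw [alpha_eq]
    exact Real.rpow_pos_of_pos (by linarith) _
  -- upper-bound set facts (for sigma1)
  have hS1mem : ∀ s : ℝ, θ + δ < s → s ∈ {s : ℝ | ∃ c : ℝ, 0 < c ∧ ∀ t : ℝ, 1 ≤ t →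
      ∀ l : ℝ, 1 ≤ l → alphaSinPow θ δ r (l * t) / alphaSinPow θ δ r t ≤ c * l ^ s} := by
    intro s hs
    obtain ⟨c, hc1, hc⟩ := ratio_bounds θ hδ hr0 hr1 (show (0:ℝ) < s - (θ + δ) by linarith)
    refine ⟨c, by linarith, fun t ht l hl => ?_⟩
    have := (hc t l ht hl).2
    have heq : θ + δ + (s - (θ + δ)) = s := by ring
    rwa [heq] at this
  have hS0mem : ∀ s : ℝ, s < θ - δ → s ∈ {s : ℝ | ∃ c : ℝ, 0 < c ∧ ∀ t : ℝ, 1 ≤ t →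
      ∀ l : ℝ, 1 ≤ l → c * l ^ s ≤ alphaSinPow θ δ r (l * t) / alphaSinPow θ δ r t} := by
    intro s hs
    obtain ⟨c, hc1, hc⟩ := ratio_bounds θ hδ hr0 hr1 (show (0:ℝ) < (θ - δ) - s by linarith)
    refine ⟨c⁻¹, by positivity, fun t ht l hl => ?_⟩
    have := (hc t l ht hl).1
    have heq : θ - δ - ((θ - δ) - s) = s := by ring
    rwa [heq] at this
  -- non-membership bounds via special points
  have hS1lb : ∀ s : ℝ, (∃ c : ℝ, 0 < c ∧ ∀ t : ℝ, 1 ≤ t → ∀ l : ℝ, 1 ≤ l →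
      alphaSinPow θ δ r (l * t) / alphaSinPow θ δ r t ≤ c * l ^ s) → θ + δ ≤ s := by
    rintro s ⟨c, hc0, hc⟩
    by_contra hcon
    push_neg at hcon
    have hq0 : (0:ℝ) < θ + δ - s := by linarith
    obtain ⟨y, hyM, hy0, k, hk⟩ := exists_big hr0 hr1 hpi2 (max 0 (Real.log c / (θ + δ - s)))
    set l : ℝ := Real.exp (Real.exp y) with hldef
    have hl1 : (1:ℝ) ≤ l := Real.one_le_exp (Real.exp_pos _).le
    have hl0 : (0:ℝ) < l := by linarith
    have hαl : alphaSinPow θ δ r l = l ^ (θ + δ) := by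
      rw [hldef, alpha_at θ δ hy0 k hk, Real.sin_pi_div_two, mul_one]
    have H := hc 1 le_rfl l hl1
    rw [mul_one, alpha_one, div_one, hαl] at H
    have hE : Real.log l = Real.exp y := by rw [hldef, Real.log_exp]
    rw [rpow_exp hl0, ← Real.exp_log hc0, rpow_exp hl0, ← Real.exp_add] at H
    have H2 := Real.exp_le_exp.1 H
    rw [hE] at H2
    have hM1 : Real.log c / (θ + δ - s) < Real.exp y := lt_of_le_of_lt (le_max_right _ _) hyM
    rw [div_lt_iff₀ hq0] at hM1
    have hr3 : Real.exp y * (θ + δ - s) = (θ + δ) * Real.exp y - s * Real.exp y := by ring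
    linarith
  have hS0ub : ∀ s : ℝ, (∃ c : ℝ, 0 < c ∧ ∀ t : ℝ, 1 ≤ t → ∀ l : ℝ, 1 ≤ l →
      c * l ^ s ≤ alphaSinPow θ δ r (l * t) / alphaSinPow θ δ r t) → s ≤ θ - δ := by
    rintro s ⟨c, hc0, hc⟩
    by_contra hcon
    push_neg at hcon
    have hq0 : (0:ℝ) < s - (θ - δ) := by linarith
    have hp1 : (1:ℝ) ≤ π / 2 + π := by nlinarith [Real.pi_gt_three]
    obtain ⟨y, hyM, hy0, k, hk⟩ := exists_big hr0 hr1 hp1 (max 0 (-Real.log c / (s - (θ - δ))))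
    set l : ℝ := Real.exp (Real.exp y) with hldef
    have hl1 : (1:ℝ) ≤ l := Real.one_le_exp (Real.exp_pos _).le
    have hl0 : (0:ℝ) < l := by linarith
    have hαl : alphaSinPow θ δ r l = l ^ (θ - δ) := by
      rw [hldef, alpha_at θ δ hy0 k hk, Real.sin_add_pi, Real.sin_pi_div_two]
      ring_nf
    have H := hc 1 le_rfl l hl1
    rw [mul_one, alpha_one, div_one, hαl] at H
    have hE : Real.log l = Real.exp y := by rw [hldef, Real.log_exp]
    rw [rpow_exp hl0, ← Real.exp_log hc0, rpow_exp hl0, ← Real.exp_add] at H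
    have H2 := Real.exp_le_exp.1 H
    rw [hE] at H2
    have hM1 : -Real.log c / (s - (θ - δ)) < Real.exp y := lt_of_le_of_lt (le_max_right _ _) hyM
    rw [div_lt_iff₀ hq0] at hM1
    have hr3 : Real.exp y * (s - (θ - δ)) = s * Real.exp y - (θ - δ) * Real.exp y := by ring
    linarith
  refine ⟨?_, ?_, ?_⟩
  · -- IsRO
    refine ⟨?_, hpos, ?_⟩
    · have hmeas : Measurable (alphaSinPow θ δ r) := by
        unfold alphaSinPow
        apply Measurable.ite (measurableSet_lt measurable_const measurable_id)
        · exact measurable_id.pow (measurable_const.add (measurable_const.mul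
            (Real.measurable_sin.comp
              ((Real.measurable_log.comp Real.measurable_log).pow measurable_const))))
        · exact measurable_id.pow measurable_const
      exact hmeas.comp measurable_subtype_coe
    · obtain ⟨c, hc1, hc⟩ := ratio_bounds θ hδ hr0 hr1 one_pos
      have hc0 : (0:ℝ) < c := by linarith
      set M : ℝ := |θ - δ - 1| + |θ + δ + 1| + 1 with hMdef
      have hM0 : 0 < M := by positivity
      set C : ℝ := c * Real.exp (M * Real.log 2) with hCdef
      have hlog2 : (0:ℝ) ≤ Real.log 2 := Real.log_nonneg one_le_two
      have hC1 : (1:ℝ) ≤ C := by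
        calc (1:ℝ) = 1 * 1 := (one_mul 1).symm
          _ ≤ c * Real.exp (M * Real.log 2) := by
              apply mul_le_mul hc1 (Real.one_le_exp (by positivity)) one_pos.le hc0.le
      refine ⟨2, one_lt_two, C, hC1, fun t ht l hl hlb => ?_⟩
      have hl0 : (0:ℝ) < l := by linarith
      have hll : Real.log l ≤ Real.log 2 := Real.log_le_log hl0 hlb
      have hll0 : (0:ℝ) ≤ Real.log l := Real.log_nonneg hl
      have habs1 : (θ + δ + 1) * Real.log l ≤ M * Real.log 2 := by
        have h1 : (θ + δ + 1) * Real.log l ≤ |θ + δ + 1| * Real.log l :=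
          mul_le_mul_of_nonneg_right (le_abs_self _) hll0
        have h2 : |θ + δ + 1| * Real.log l ≤ |θ + δ + 1| * Real.log 2 :=
          mul_le_mul_of_nonneg_left hll (abs_nonneg _)
        have h3 : |θ + δ + 1| * Real.log 2 ≤ M * Real.log 2 := by
          apply mul_le_mul_of_nonneg_right _ hlog2
          have := abs_nonneg (θ - δ - 1); simp only [hMdef]; linarith
        linarith
      have habs0 : -(M * Real.log 2) ≤ (θ - δ - 1) * Real.log l := by
        have h1 : -|θ - δ - 1| * Real.log l ≤ (θ - δ - 1) * Real.log l :=
          mul_le_mul_of_nonneg_right (neg_abs_le _) hll0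
        have h3 : |θ - δ - 1| * Real.log l ≤ |θ - δ - 1| * Real.log 2 :=
          mul_le_mul_of_nonneg_left hll (abs_nonneg _)
        have h4 : |θ - δ - 1| * Real.log 2 ≤ M * Real.log 2 := by
          apply mul_le_mul_of_nonneg_right _ hlog2
          have := abs_nonneg (θ + δ + 1); simp only [hMdef]; linarith
        nlinarith [abs_nonneg (θ - δ - 1)]
      obtain ⟨hlow, hup⟩ := hc t l ht hl
      constructor
      · refine le_trans ?_ hlow
        calc C⁻¹ = c⁻¹ * Real.exp (-(M * Real.log 2)) := by
              rw [hCdef, mul_inv, Real.exp_neg]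
          _ ≤ c⁻¹ * l ^ (θ - δ - 1) := by
              rw [rpow_exp hl0]
              exact mul_le_mul_of_nonneg_left (Real.exp_le_exp.2 habs0) (by positivity)
      · calc alphaSinPow θ δ r (l * t) / alphaSinPow θ δ r t ≤ c * l ^ (θ + δ + 1) := hup
          _ ≤ C := by
              rw [hCdef, rpow_exp hl0]
              exact mul_le_mul_of_nonneg_left (Real.exp_le_exp.2 habs1) hc0.le
  · -- sigma0
    unfold sigma0
    have hbdd : BddAbove {s : ℝ | ∃ c : ℝ, 0 < c ∧ ∀ t : ℝ, 1 ≤ t → ∀ l : ℝ, 1 ≤ l →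
        c * l ^ s ≤ alphaSinPow θ δ r (l * t) / alphaSinPow θ δ r t} :=
      ⟨θ - δ, fun s hs => hS0ub s hs⟩
    apply le_antisymm
    · exact csSup_le ⟨θ - δ - 1, hS0mem _ (by linarith)⟩ (fun s hs => hS0ub s hs)
    · by_contra hcon
      push_neg at hcon
      obtain ⟨s, hs1, hs2⟩ := exists_between hcon
      exact absurd (le_csSup hbdd (hS0mem s hs2)) (not_le.2 hs1)
  · -- sigma1
    unfold sigma1
    have hbdd : BddBelow {s : ℝ | ∃ c : ℝ, 0 < c ∧ ∀ t : ℝ, 1 ≤ t → ∀ l : ℝ, 1 ≤ l →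
        alphaSinPow θ δ r (l * t) / alphaSinPow θ δ r t ≤ c * l ^ s} :=
      ⟨θ + δ, fun s hs => hS1lb s hs⟩
    apply le_antisymm
    · by_contra hcon
      push_neg at hcon
      obtain ⟨s, hs1, hs2⟩ := exists_between hcon
      exact absurd (csInf_le hbdd (hS1mem s hs1)) (not_le.2 hs2)
    · exact le_csInf ⟨θ + δ + 1, hS1mem _ (by linarith)⟩ (fun s hs => hS1lb s hs)
end

section
/- For r > 1, θ ∈ ℝ, δ > 0, the function α(t) := t^{θ + δ sin((ln ln t)^r)} for t > e (and α(t) := t^θ for 1 ≤ t ≤ e) does NOT belong to the class RO. -/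
open Real Filter

lemma rpow_add_mul_rpow_sub_one_mul_sub_le {x y r : ℝ} (hx : 0 < x) (hy : 0 ≤ y)
    (hr : 1 ≤ r) :
    x ^ r + r * x ^ (r - 1) * (y - x) ≤ y ^ r := by
  have hB := one_add_mul_self_le_rpow_one_add
    (s := (y - x) / x) (by rw [le_div_iff₀ hx]; linarith) hr
  have hyx : 1 + (y - x) / x = y / x := by field_simp; ring
  rw [hyx, div_rpow hy hx.le, le_div_iff₀ (rpow_pos_of_pos hx r)] at hB
  calc x ^ r + r * x ^ (r - 1) * (y - x) = (1 + r * ((y - x) / x)) * x ^ r := by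
        rw [rpow_sub_one hx.ne']; field_simp
    _ ≤ y ^ r := hB

lemma log_add_sub_log_le {a L : ℝ} (ha : 0 ≤ a) (hL : 0 < L) :
    log (a + L) - log L ≤ a / L := by
  have h := log_le_sub_one_of_pos (show 0 < (a + L) / L by positivity)
  rw [log_div (by positivity) hL.ne'] at h
  calc log (a + L) - log L ≤ (a + L) / L - 1 := h
    _ = a / L := by field_simp; ring

lemma div_add_le_log_add_sub_log {a L : ℝ} (ha : 0 ≤ a) (hL : 0 < L) :
    a / (a + L) ≤ log (a + L) - log L := by
  have h := one_sub_inv_le_log_of_pos (show 0 < (a + L) / L by positivity)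
  rw [log_div (by positivity) hL.ne', inv_div] at h
  calc a / (a + L) = 1 - L / (a + L) := by field_simp; ring
    _ ≤ log (a + L) - log L := h

/-- The increment of the phase `(log log t) ^ r` when `t = exp (exp x)` is multiplied by `exp a`. -/
noncomputable def phaseGap (a r x : ℝ) : ℝ := log (a + exp x) ^ r - x ^ r

section phaseGap

variable {a r x : ℝ}

lemma le_log_add_exp (ha : 0 ≤ a) : x ≤ log (a + exp x) := by
  simpa using log_le_log (exp_pos x) (le_add_of_nonneg_left ha)

lemma log_add_exp_sub_ge (ha : 0 ≤ a) : a / (a + exp x) ≤ log (a + exp x) - x := by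
  simpa using div_add_le_log_add_sub_log ha (exp_pos x)

lemma log_add_exp_sub_le (ha : 0 ≤ a) : log (a + exp x) - x ≤ a / exp x := by
  simpa using log_add_sub_log_le ha (exp_pos x)

lemma mul_rpow_sub_one_mul_div_le_phaseGap (ha : 0 ≤ a) (hr : 1 ≤ r) (hx : 0 < x) :
    r * x ^ (r - 1) * (a / (a + exp x)) ≤ phaseGap a r x := by
  have htangent := rpow_add_mul_rpow_sub_one_mul_sub_le hx (hx.le.trans (le_log_add_exp ha)) hr
  have hincrement := mul_le_mul_of_nonneg_left (log_add_exp_sub_ge (x := x) ha)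
    (by positivity : 0 ≤ r * x ^ (r - 1))
  unfold phaseGap
  linarith

lemma phaseGap_nonneg (ha : 0 ≤ a) (hr : 1 ≤ r) (hx : 0 < x) : 0 ≤ phaseGap a r x :=
  le_trans (by positivity) (mul_rpow_sub_one_mul_div_le_phaseGap ha hr hx)

lemma phaseGap_le (ha : 0 ≤ a) (hr : 1 ≤ r) (hx : 0 < x) (hax : a ≤ exp x) :
    phaseGap a r x ≤ r * (x + 1) ^ (r - 1) * (a / exp x) := by
  set N := log (a + exp x)
  have hxN : x ≤ N := le_log_add_exp ha
  have hNx : N - x ≤ a / exp x := log_add_exp_sub_le ha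
  have hN1 : N ≤ x + 1 := by linarith [(div_le_one (exp_pos x)).2 hax]
  have htangent := rpow_add_mul_rpow_sub_one_mul_sub_le (hx.trans_le hxN) hx.le hr
  have hpow : N ^ (r - 1) ≤ (x + 1) ^ (r - 1) :=
    rpow_le_rpow (hx.le.trans hxN) hN1 (by linarith)
  calc phaseGap a r x ≤ r * N ^ (r - 1) * (N - x) := by unfold phaseGap; linarith
    _ ≤ r * (x + 1) ^ (r - 1) * (a / exp x) := by gcongr

lemma tendsto_phaseGap_nhds_zero (ha : 0 ≤ a) (hr : 1 ≤ r) :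
    Tendsto (phaseGap a r) atTop (nhds 0) := by
  have hdecay : Tendsto (fun x => r * (x + 1) ^ (r - 1) * (a / exp x)) atTop (nhds 0) := by
    have h := ((tendsto_rpow_mul_exp_neg_mul_atTop_nhds_zero (r - 1) 1 one_pos).comp
      (tendsto_atTop_add_const_right atTop 1 tendsto_id)).const_mul (r * a * exp 1)
    rw [mul_zero] at h
    refine h.congr fun x => ?_
    simp only [Function.comp_apply, id, neg_one_mul, exp_neg, exp_add]
    field_simp
  refine tendsto_of_tendsto_of_tendsto_of_le_of_le' tendsto_const_nhds hdecay ?_ ?_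
  · filter_upwards [eventually_gt_atTop 0] with x hx using phaseGap_nonneg ha hr hx
  · filter_upwards [eventually_gt_atTop 0, (tendsto_exp_atTop.eventually_ge_atTop a)]
      with x hx hax using phaseGap_le ha hr hx hax

lemma tendsto_phaseGap_mul_exp_atTop (ha : 0 < a) (hr : 1 < r) :
    Tendsto (fun x => phaseGap a r x * exp x) atTop atTop := by
  have hgrowth : Tendsto (fun x => r * a / 2 * x ^ (r - 1)) atTop atTop :=
    (tendsto_rpow_atTop (by linarith)).const_mul_atTop (by positivity)
  refine tendsto_atTop_mono' atTop ?_ hgrowth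
  filter_upwards [eventually_gt_atTop 0, (tendsto_exp_atTop.eventually_ge_atTop a)]
    with x hx hax
  have hhalf : 1 / 2 ≤ exp x / (a + exp x) := by
    rw [div_le_div_iff₀ two_pos (by positivity)]; linarith
  calc r * a / 2 * x ^ (r - 1) = r * x ^ (r - 1) * a * (1 / 2) := by ring
    _ ≤ r * x ^ (r - 1) * a * (exp x / (a + exp x)) := by gcongr
    _ = r * x ^ (r - 1) * (a / (a + exp x)) * exp x := by ring
    _ ≤ phaseGap a r x * exp x := by
      gcongr
      exact mul_rpow_sub_one_mul_div_le_phaseGap ha.le hr.le hx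

end phaseGap

lemma log_alphaSinPow_of_exp_one_lt {θ δ r t : ℝ} (ht : exp 1 < t) :
    log (alphaSinPow θ δ r t) = (θ + δ * sin (log (log t) ^ r)) * log t := by
  rw [alphaSinPow, if_pos ht, log_rpow ((exp_pos 1).trans ht)]

lemma log_alphaSinPow_mul_exp_exp_sub {θ δ r b x : ℝ} {k : ℕ} (hb : 1 < b) (hx : 0 < x)
    (hxr : x ^ r = k * (2 * π)) :
    log (alphaSinPow θ δ r (b * exp (exp x))) - log (alphaSinPow θ δ r (exp (exp x))) =
      θ * log b + δ * sin (phaseGap (log b) r x) * (log b + exp x) := by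
  have hT : exp 1 < exp (exp x) := exp_lt_exp.2 (one_lt_exp_iff.2 hx)
  have hbT : exp 1 < b * exp (exp x) := hT.trans (lt_mul_of_one_lt_left (exp_pos _) hb)
  have hlogbT : log (b * exp (exp x)) = log b + exp x := by
    rw [log_mul (by linarith) (exp_pos _).ne', log_exp]
  have hsin : sin (log (log b + exp x) ^ r) = sin (phaseGap (log b) r x) := by
    rw [phaseGap, hxr, sin_sub_nat_mul_two_pi]
  have hsin0 : sin (x ^ r) = 0 := by simpa [hxr] using sin_add_nat_mul_two_pi 0 k
  rw [log_alphaSinPow_of_exp_one_lt hT, log_alphaSinPow_of_exp_one_lt hbT, hlogbT, hsin,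
    log_exp, log_exp, hsin0]
  ring

lemma le_log_alphaSinPow_mul_exp_exp_sub {θ δ r b x : ℝ} {k : ℕ} (hb : 1 < b) (hδ : 0 ≤ δ)
    (hr : 1 ≤ r) (hx : 0 < x) (hxr : x ^ r = k * (2 * π))
    (hgap : phaseGap (log b) r x ≤ π / 2) :
    θ * log b + 2 / π * δ * (phaseGap (log b) r x * exp x) ≤
      log (alphaSinPow θ δ r (b * exp (exp x))) - log (alphaSinPow θ δ r (exp (exp x))) := by
  have hlogb : 0 < log b := log_pos hb
  have hsin := mul_le_sin (phaseGap_nonneg hlogb.le hr hx) hgap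
  have hsin0 : 0 ≤ sin (phaseGap (log b) r x) :=
    le_trans (mul_nonneg (by positivity) (phaseGap_nonneg hlogb.le hr hx)) hsin
  rw [log_alphaSinPow_mul_exp_exp_sub hb hx hxr]
  calc θ * log b + 2 / π * δ * (phaseGap (log b) r x * exp x)
      = θ * log b + δ * (2 / π * phaseGap (log b) r x) * exp x := by ring
    _ ≤ θ * log b + δ * sin (phaseGap (log b) r x) * exp x := by gcongr
    _ ≤ θ * log b + δ * sin (phaseGap (log b) r x) * (log b + exp x) := by gcongr; linarith

lemma IsRO.exists_log_sub_le {α : ℝ → ℝ} (hα : IsRO α) :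
    ∃ b, 1 < b ∧ ∃ C, ∀ t, 1 ≤ t → log (α (b * t)) - log (α t) ≤ C := by
  obtain ⟨-, hpos, b, hb, c, -, hbound⟩ := hα
  refine ⟨b, hb, log c, fun t ht => ?_⟩
  rw [← log_div (hpos _ (by nlinarith)).ne' (hpos t ht).ne']
  exact log_le_log (div_pos (hpos _ (by nlinarith)) (hpos t ht)) (hbound t ht b hb.le le_rfl).2

/-- For `r > 1`, the function `t^{θ + δ sin((ln ln t)^r)}` does not belong to RO. -/
theorem stmt9 (θ δ r : ℝ) (hδ : 0 < δ) (hr : 1 < r) :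
    ¬ IsRO (alphaSinPow θ δ r) := by
  intro hα
  obtain ⟨b, hb, C, hC⟩ := hα.exists_log_sub_le
  have hlogb : 0 < log b := log_pos hb
  set M : ℕ → ℝ := fun k => (k * (2 * π)) ^ r⁻¹
  have hMr : ∀ k, M k ^ r = k * (2 * π) := fun k => by
    rw [← rpow_mul (by positivity), inv_mul_cancel₀ (by positivity), rpow_one]
  have hM : Tendsto M atTop atTop :=
    (tendsto_rpow_atTop (by positivity)).comp
      (tendsto_natCast_atTop_atTop.atTop_mul_const (by positivity))
  have hgrowth : Tendsto (fun x => θ * log b + 2 / π * δ * (phaseGap (log b) r x * exp x))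
      atTop atTop :=
    tendsto_atTop_add_const_left _ _
      ((tendsto_phaseGap_mul_exp_atTop hlogb hr).const_mul_atTop (by positivity))
  obtain ⟨k, hk, hgap, hbig⟩ := (hM.eventually ((eventually_gt_atTop 0).and
    (((tendsto_phaseGap_nhds_zero hlogb.le hr.le).eventually_le_const pi_div_two_pos).and
      (hgrowth.eventually_gt_atTop C)))).exists
  have hincrement := le_log_alphaSinPow_mul_exp_exp_sub (θ := θ) hb hδ.le hr.le hk (hMr k) hgap
  linarith [hC _ (one_le_exp (exp_pos (M k)).le)]
end

section
/- Let α, α₁ ∈ RO. The Hörmander space H^{α₁}(ℝⁿ) is continuously embedded in H^{α}(ℝⁿ) if and only if the function t ↦ α(t)/α₁(t) is bounded in a neighborhood of infinity. -/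
open MeasureTheory

/-- The smoothed modulus `⟨ξ⟩ = (1 + |ξ|²)^{1/2}`. -/
noncomputable def smod {n : ℕ} (ξ : EuclideanSpace ℝ (Fin n)) : ℝ :=
  Real.sqrt (1 + ‖ξ‖ ^ 2)

/-- Membership in the (Fourier-side model of the) Hörmander space `H^α(ℝⁿ)`:
`g` is the Fourier transform of a distribution `w ∈ H^α(ℝⁿ)` iff it is (locally
integrable and) such that `∫ α²(⟨ξ⟩) |g ξ|² dξ < ∞`. -/
def MemH {n : ℕ} (α : ℝ → ℝ) (g : EuclideanSpace ℝ (Fin n) → ℂ) : Prop :=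
  Integrable fun ξ => α (smod ξ) ^ 2 * ‖g ξ‖ ^ 2

/-- The Hörmander norm `‖w‖_{H^α} = (∫ α²(⟨ξ⟩) |ŵ(ξ)|² dξ)^{1/2}`, computed on the
Fourier transform `g = ŵ`. -/
noncomputable def Hnorm {n : ℕ} (α : ℝ → ℝ) (g : EuclideanSpace ℝ (Fin n) → ℂ) : ℝ :=
  (∫ ξ, α (smod ξ) ^ 2 * ‖g ξ‖ ^ 2) ^ ((1 : ℝ) / 2)

/-!
Sufficiency: an RO function is bounded above and below by positive constants on every
compact subinterval of `[1, ∞)`, so a bound of `α / α₁` near infinity extends to a bound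
`α ≤ C α₁` on all of `[1, ∞)`, and the embedding follows by integrating this pointwise bound.

Necessity: test the embedding against the indicator of the shell `t ≤ ⟨ξ⟩ ≤ b t`. On that
shell the RO condition gives `α(⟨ξ⟩) ≍ α(t)` and `α₁(⟨ξ⟩) ≍ α₁(t)`, so the two norms are
comparable to `α(t)` and `α₁(t)` times the square root of the shell's volume, which is
positive and finite as soon as `n > 0`.
-/

open Set

lemma one_le_smod {n : ℕ} (ξ : EuclideanSpace ℝ (Fin n)) : 1 ≤ smod ξ :=
  Real.one_le_sqrt.2 (le_add_of_nonneg_right (sq_nonneg _))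

lemma norm_le_smod {n : ℕ} (ξ : EuclideanSpace ℝ (Fin n)) : ‖ξ‖ ≤ smod ξ :=
  Real.le_sqrt_of_sq_le (le_add_of_nonneg_left zero_le_one)

lemma continuous_smod {n : ℕ} : Continuous (smod : EuclideanSpace ℝ (Fin n) → ℝ) :=
  (continuous_const.add (continuous_norm.pow 2)).sqrt

lemma exists_smod_eq {n : ℕ} [NeZero n] {m : ℝ} (hm : 1 ≤ m) :
    ∃ ξ : EuclideanSpace ℝ (Fin n), smod ξ = m := by
  obtain ⟨ξ, hξ⟩ := exists_norm_eq (EuclideanSpace ℝ (Fin n)) (Real.sqrt_nonneg (m ^ 2 - 1))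
  refine ⟨ξ, ?_⟩
  rw [smod, hξ, Real.sq_sqrt (by nlinarith), add_sub_cancel, Real.sqrt_sq (by linarith)]

lemma volume_smod_preimage_Icc_lt_top {n : ℕ} (a b : ℝ) :
    volume (smod ⁻¹' Icc a b : Set (EuclideanSpace ℝ (Fin n))) < ⊤ :=
  (measure_mono fun ξ (hξ : smod ξ ∈ Icc a b) => mem_closedBall_zero_iff.2
    ((norm_le_smod ξ).trans hξ.2)).trans_lt measure_closedBall_lt_top

lemma volume_smod_preimage_Icc_pos {n : ℕ} [NeZero n] {a b : ℝ} (ha : 1 ≤ a) (hab : a < b) :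
    0 < volume (smod ⁻¹' Icc a b : Set (EuclideanSpace ℝ (Fin n))) := by
  obtain ⟨ξ, hξ⟩ := exists_smod_eq (n := n) (m := (a + b) / 2) (by linarith)
  have hopen : IsOpen (smod ⁻¹' Ioo a b : Set (EuclideanSpace ℝ (Fin n))) :=
    isOpen_Ioo.preimage continuous_smod
  have hmem : ξ ∈ smod ⁻¹' Ioo a b := by
    rw [mem_preimage, hξ]
    constructor <;> linarith
  exact (hopen.measure_pos volume ⟨ξ, hmem⟩).trans_le
    (measure_mono (preimage_mono Ioo_subset_Icc_self))

lemma hnorm_eq_sqrt {n : ℕ} (α : ℝ → ℝ) (g : EuclideanSpace ℝ (Fin n) → ℂ) :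
    Hnorm α g = √(∫ ξ, α (smod ξ) ^ 2 * ‖g ξ‖ ^ 2) := by
  rw [Hnorm, Real.sqrt_eq_rpow]

lemma memH_and_hnorm_le_of_abs_le {n : ℕ} {α α₁ : ℝ → ℝ} {C : ℝ} (hC : 0 ≤ C)
    (hα : Measurable fun ξ : EuclideanSpace ℝ (Fin n) => α (smod ξ))
    (hα₁ : Measurable fun ξ : EuclideanSpace ℝ (Fin n) => α₁ (smod ξ))
    (hle : ∀ ξ : EuclideanSpace ℝ (Fin n), |α (smod ξ)| ≤ C * |α₁ (smod ξ)|)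
    {g : EuclideanSpace ℝ (Fin n) → ℂ} (hg : MemH α₁ g) :
    MemH α g ∧ Hnorm α g ≤ C * Hnorm α₁ g := by
  have hsq : ∀ ξ, α (smod ξ) ^ 2 ≤ C ^ 2 * α₁ (smod ξ) ^ 2 := fun ξ => by
    rw [← sq_abs, ← sq_abs (α₁ _), ← mul_pow]
    exact pow_le_pow_left₀ (abs_nonneg _) (hle ξ) 2
  -- `g` need not be measurable: the `α`-integrand is a measurable multiple of the `α₁`-integrand
  have hfactor : (fun ξ => α (smod ξ) ^ 2 * ‖g ξ‖ ^ 2) =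
      fun ξ => (α (smod ξ) / α₁ (smod ξ)) ^ 2 * (α₁ (smod ξ) ^ 2 * ‖g ξ‖ ^ 2) := by
    funext ξ
    rcases eq_or_ne (α₁ (smod ξ)) 0 with h | h
    · have : α (smod ξ) = 0 := by simpa [h] using hsq ξ
      simp [h, this]
    · field_simp
  have hbound : ∀ ξ, α (smod ξ) ^ 2 * ‖g ξ‖ ^ 2 ≤ C ^ 2 * (α₁ (smod ξ) ^ 2 * ‖g ξ‖ ^ 2) :=
    fun ξ => by
      rw [← mul_assoc]
      gcongr
      exact hsq ξ
  have hint : MemH α g := by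
    refine (hg.const_mul (C ^ 2)).mono' ?_ (ae_of_all _ fun ξ => ?_)
    · rw [hfactor]
      exact ((hα.div hα₁).pow_const 2).aestronglyMeasurable.mul hg.aestronglyMeasurable
    · rw [Real.norm_of_nonneg (by positivity)]
      exact hbound ξ
  refine ⟨hint, ?_⟩
  rw [hnorm_eq_sqrt, hnorm_eq_sqrt, ← Real.sqrt_sq hC, ← Real.sqrt_mul (sq_nonneg C),
    ← integral_const_mul]
  exact Real.sqrt_le_sqrt (integral_mono hint (hg.const_mul _) hbound)

section Indicator

variable {n : ℕ} {α : ℝ → ℝ} {S : Set (EuclideanSpace ℝ (Fin n))}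

lemma mul_norm_indicator_one_sq {X : Type*} (S : Set X) (f : X → ℝ) (x : X) :
    f x * ‖S.indicator (fun _ => (1 : ℂ)) x‖ ^ 2 = S.indicator f x := by
  by_cases hx : x ∈ S <;> simp [hx]

lemma memH_indicator_one_iff (hS : MeasurableSet S) :
    MemH α (S.indicator fun _ => 1) ↔ IntegrableOn (fun ξ => α (smod ξ) ^ 2) S := by
  simp only [MemH, mul_norm_indicator_one_sq S fun ξ => α (smod ξ) ^ 2]
  exact integrable_indicator_iff hS

lemma hnorm_indicator_one (hS : MeasurableSet S) :
    Hnorm α (S.indicator fun _ => 1) = √(∫ ξ in S, α (smod ξ) ^ 2) := by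
  simp only [hnorm_eq_sqrt, mul_norm_indicator_one_sq S fun ξ => α (smod ξ) ^ 2,
    integral_indicator hS]

lemma le_hnorm_indicator_one (hS : MeasurableSet S) (hSfin : volume S ≠ ⊤) {m : ℝ}
    (hm : 0 ≤ m) (hα : ∀ ξ ∈ S, m ≤ α (smod ξ)) (hg : MemH α (S.indicator fun _ => 1)) :
    m * √(volume.real S) ≤ Hnorm α (S.indicator fun _ => 1) := by
  rw [hnorm_indicator_one hS, ← Real.sqrt_sq hm, ← Real.sqrt_mul (sq_nonneg m)]
  exact Real.sqrt_le_sqrt (setIntegral_ge_of_const_le_real hS hSfin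
    (fun ξ hξ => pow_le_pow_left₀ hm (hα ξ hξ) 2) ((memH_indicator_one_iff hS).1 hg))

lemma memH_indicator_one_and_hnorm_le (hS : MeasurableSet S) (hSfin : volume S ≠ ⊤) {M : ℝ}
    (hM : 0 ≤ M) (hmeas : Measurable fun ξ : EuclideanSpace ℝ (Fin n) => α (smod ξ))
    (hα : ∀ ξ ∈ S, |α (smod ξ)| ≤ M) :
    MemH α (S.indicator fun _ => 1) ∧ Hnorm α (S.indicator fun _ => 1) ≤ M * √(volume.real S) := by
  have hbound : ∀ ξ ∈ S, ‖α (smod ξ) ^ 2‖ ≤ M ^ 2 := fun ξ hξ => by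
    rw [norm_pow, Real.norm_eq_abs]
    exact pow_le_pow_left₀ (abs_nonneg _) (hα ξ hξ) 2
  refine ⟨(memH_indicator_one_iff hS).2 (Measure.integrableOn_of_bounded hSfin
    (hmeas.pow_const 2).aestronglyMeasurable ((ae_restrict_iff' hS).2 (ae_of_all _ hbound))), ?_⟩
  rw [hnorm_indicator_one hS, ← Real.sqrt_sq hM, ← Real.sqrt_mul (sq_nonneg M)]
  exact Real.sqrt_le_sqrt ((Real.le_norm_self _).trans
    (norm_setIntegral_le_of_norm_le_const hSfin.lt_top hbound))

end Indicator

namespace IsRO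

variable {α α₁ : ℝ → ℝ}

lemma pos (hα : IsRO α) {t : ℝ} (ht : 1 ≤ t) : 0 < α t :=
  hα.2.1 t ht

lemma measurable_comp_smod {n : ℕ} (hα : IsRO α) :
    Measurable fun ξ : EuclideanSpace ℝ (Fin n) => α (smod ξ) :=
  hα.1.comp (continuous_smod.measurable.subtype_mk (h := one_le_smod))

lemma exists_comparable (hα : IsRO α) :
    ∃ b, 1 < b ∧ ∃ c, 0 < c ∧ ∀ t, 1 ≤ t → ∀ s ∈ Icc t (b * t),
      c⁻¹ * α t ≤ α s ∧ α s ≤ c * α t := by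
  obtain ⟨-, hpos, b, hb, c, hc, h⟩ := hα
  refine ⟨b, hb, c, by linarith, fun t ht s ⟨hts, hsb⟩ => ?_⟩
  have ht0 : 0 < t := by linarith
  obtain ⟨h₁, h₂⟩ := h t ht (s / t) ((one_le_div ht0).2 hts) ((div_le_iff₀ ht0).2 hsb)
  rw [div_mul_cancel₀ s ht0.ne'] at h₁ h₂
  exact ⟨(le_div_iff₀ (hpos t ht)).1 h₁, (div_le_iff₀ (hpos t ht)).1 h₂⟩

lemma exists_bounds_Icc (hα : IsRO α) (r : ℝ) :
    ∃ m M, 0 < m ∧ ∀ s ∈ Icc 1 r, m ≤ α s ∧ α s ≤ M := by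
  obtain ⟨b, hb, c, hc, hcomp⟩ := hα.exists_comparable
  have hα1 := hα.pos le_rfl
  have key : ∀ k : ℕ, ∀ s ∈ Icc 1 (b ^ k), (c ^ k)⁻¹ * α 1 ≤ α s ∧ α s ≤ c ^ k * α 1 := by
    intro k
    induction k with
    | zero =>
      rintro s ⟨h1, h2⟩
      obtain rfl := le_antisymm (h2.trans_eq (pow_zero b)) h1
      simp
    | succ k ih =>
      rintro s ⟨h1, h2⟩
      -- one RO step back from `s` lands in `[1, b ^ k]`
      set t := max 1 (s / b)
      have hb0 : 0 < b := by linarith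
      have ht : t ∈ Icc 1 (b ^ k) := ⟨le_max_left _ _, max_le (one_le_pow₀ hb.le)
        ((div_le_iff₀ hb0).2 (h2.trans_eq (pow_succ b k)))⟩
      have hs : s ∈ Icc t (b * t) := ⟨max_le h1 (div_le_self (by linarith) hb.le),
        (mul_div_cancel₀ s hb0.ne').symm.le.trans
          (mul_le_mul_of_nonneg_left (le_max_right _ _) hb0.le)⟩
      obtain ⟨ih₁, ih₂⟩ := ih t ht
      obtain ⟨h₁, h₂⟩ := hcomp t ht.1 s hs
      rw [pow_succ', mul_inv, mul_assoc, mul_assoc]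
      exact ⟨(mul_le_mul_of_nonneg_left ih₁ (by positivity)).trans h₁,
        h₂.trans (mul_le_mul_of_nonneg_left ih₂ hc.le)⟩
  obtain ⟨k, hk⟩ := pow_unbounded_of_one_lt r hb
  exact ⟨(c ^ k)⁻¹ * α 1, c ^ k * α 1, by positivity,
    fun s ⟨h1, h2⟩ => key k s ⟨h1, h2.trans hk.le⟩⟩

lemma exists_le_mul_of_ratio_le (hα : IsRO α) (hα₁ : IsRO α₁) {r M : ℝ}
    (h : ∀ t, r ≤ t → α t / α₁ t ≤ M) : ∃ C, 0 < C ∧ ∀ s, 1 ≤ s → α s ≤ C * α₁ s := by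
  obtain ⟨_, A, -, hA⟩ := hα.exists_bounds_Icc r
  obtain ⟨m₁, _, hm₁, hm₁'⟩ := hα₁.exists_bounds_Icc r
  have hdom : ∀ s, 1 ≤ s → α s ≤ max M (A / m₁) * α₁ s := by
    intro s hs
    rcases le_total r s with hrs | hsr
    · calc α s ≤ M * α₁ s := (div_le_iff₀ (hα₁.pos hs)).1 (h s hrs)
        _ ≤ max M (A / m₁) * α₁ s :=
          mul_le_mul_of_nonneg_right (le_max_left _ _) (hα₁.pos hs).le
    · have hA0 : 0 < A := (hα.pos hs).trans_le (hA s ⟨hs, hsr⟩).2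
      calc α s ≤ A / m₁ * m₁ := (hA s ⟨hs, hsr⟩).2.trans_eq (div_mul_cancel₀ A hm₁.ne').symm
        _ ≤ max M (A / m₁) * α₁ s :=
          mul_le_mul (le_max_right _ _) (hm₁' s ⟨hs, hsr⟩).1 hm₁.le
            ((div_pos hA0 hm₁).le.trans (le_max_right _ _))
  refine ⟨_, pos_of_mul_pos_left ((hα.pos le_rfl).trans_le (hdom 1 le_rfl))
    (hα₁.pos le_rfl).le, hdom⟩

lemma exists_ratio_le_of_embedding {n : ℕ} (hn : 0 < n) (hα : IsRO α) (hα₁ : IsRO α₁)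
    {C : ℝ} (hC : 0 ≤ C) (hemb : ∀ g : EuclideanSpace ℝ (Fin n) → ℂ,
      MemH α₁ g → MemH α g ∧ Hnorm α g ≤ C * Hnorm α₁ g) :
    ∃ M, ∀ t, 1 ≤ t → α t / α₁ t ≤ M := by
  have : NeZero n := ⟨hn.ne'⟩
  obtain ⟨b, hb, c, hc, hcomp⟩ := hα.exists_comparable
  obtain ⟨b₁, hb₁, c₁, hc₁, hcomp₁⟩ := hα₁.exists_comparable
  refine ⟨c * C * c₁, fun t ht => ?_⟩
  set S : Set (EuclideanSpace ℝ (Fin n)) := smod ⁻¹' Icc t (min b b₁ * t)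
  have hS : MeasurableSet S := measurableSet_Icc.preimage continuous_smod.measurable
  have hSfin := volume_smod_preimage_Icc_lt_top (n := n) t (min b b₁ * t)
  have hν : 0 < √(volume.real S) := Real.sqrt_pos.2 (ENNReal.toReal_pos
    (volume_smod_preimage_Icc_pos ht (lt_mul_of_one_lt_left (by linarith) (lt_min hb hb₁))).ne'
    hSfin.ne)
  have hshell : ∀ ξ ∈ S, smod ξ ∈ Icc t (b * t) ∧ smod ξ ∈ Icc t (b₁ * t) := fun ξ hξ =>
    ⟨⟨hξ.1, hξ.2.trans (by gcongr; exact min_le_left _ _)⟩,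
      ⟨hξ.1, hξ.2.trans (by gcongr; exact min_le_right _ _)⟩⟩
  obtain ⟨hg₁, hupper⟩ := memH_indicator_one_and_hnorm_le hS hSfin.ne
    (by positivity [hα₁.pos ht] : 0 ≤ c₁ * α₁ t) hα₁.measurable_comp_smod fun ξ hξ => by
      rw [abs_of_pos (hα₁.pos (one_le_smod ξ))]
      exact (hcomp₁ t ht _ (hshell ξ hξ).2).2
  obtain ⟨hg, hle⟩ := hemb _ hg₁
  have hlower := le_hnorm_indicator_one hS hSfin.ne (by positivity [hα.pos ht] : 0 ≤ c⁻¹ * α t)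
    (fun ξ hξ => (hcomp t ht _ (hshell ξ hξ).1).1) hg
  have hratio : c⁻¹ * α t ≤ C * (c₁ * α₁ t) := le_of_mul_le_mul_right
    (hlower.trans (hle.trans (mul_le_mul_of_nonneg_left hupper hC)) |>.trans_eq (by ring)) hν
  rw [div_le_iff₀ (hα₁.pos ht)]
  calc α t = c * (c⁻¹ * α t) := by field_simp
    _ ≤ c * (C * (c₁ * α₁ t)) := mul_le_mul_of_nonneg_left hratio hc.le
    _ = c * C * c₁ * α₁ t := by ring

end IsRO

/-- For `α, α₁ ∈ RO`, the Hörmander space `H^{α₁}(ℝⁿ)` is continuously embedded in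
`H^{α}(ℝⁿ)` iff `α/α₁` is bounded in a neighborhood of infinity. -/
theorem stmt13 (n : ℕ) (hn : 0 < n) (α α₁ : ℝ → ℝ) (hα : IsRO α) (hα₁ : IsRO α₁) :
    (∃ C : ℝ, 0 < C ∧ ∀ g : EuclideanSpace ℝ (Fin n) → ℂ,
        MemH α₁ g → MemH α g ∧ Hnorm α g ≤ C * Hnorm α₁ g) ↔
      ∃ r M : ℝ, ∀ t : ℝ, r ≤ t → α t / α₁ t ≤ M := by
  constructor
  · rintro ⟨C, hC, hemb⟩
    obtain ⟨M, hM⟩ := hα.exists_ratio_le_of_embedding hn hα₁ hC.le hemb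
    exact ⟨1, M, hM⟩
  · rintro ⟨r, M, hM⟩
    obtain ⟨C, hC, hdom⟩ := hα.exists_le_mul_of_ratio_le hα₁ hM
    refine ⟨C, hC, fun g => memH_and_hnorm_le_of_abs_le hC.le hα.measurable_comp_smod
      hα₁.measurable_comp_smod fun ξ => ?_⟩
    rw [abs_of_pos (hα.pos (one_le_smod ξ)), abs_of_pos (hα₁.pos (one_le_smod ξ))]
    exact hdom _ (one_le_smod ξ)
end

section
/- Let X = [X₀,X₁] and Y = [Y₀,Y₁] be regular pairs of Hilbert spaces, and let T be a linear map defined on X₀ whose restrictions T : X_j → Y_j (j = 0,1) are bounded Fredholm operators with a common kernel and equal index. Then for any interpolation parameter ψ, the bounded operator T : X_ψ → Y_ψ is Fredholm with the same kernel and index, and its range equals Y_ψ ∩ T(X₀). -/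
/-- A bounded operator between normed spaces is Fredholm if its kernel and cokernel
are finite-dimensional. -/
def IsFredholm {E F : Type*} [NormedAddCommGroup E] [NormedAddCommGroup F]
    [NormedSpace ℂ E] [NormedSpace ℂ F] (T : E →L[ℂ] F) : Prop :=
  FiniteDimensional ℂ (LinearMap.ker (T : E →ₗ[ℂ] F)) ∧ FiniteDimensional ℂ (F ⧸ LinearMap.range (T : E →ₗ[ℂ] F))

/-- The index of an operator: `dim ker T - dim coker T`. -/
noncomputable def fIndex {E F : Type*} [NormedAddCommGroup E] [NormedAddCommGroup F]
    [NormedSpace ℂ E] [NormedSpace ℂ F] (T : E →L[ℂ] F) : ℤ :=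
  (Module.finrank ℂ (LinearMap.ker (T : E →ₗ[ℂ] F)) : ℤ) -
    (Module.finrank ℂ (F ⧸ LinearMap.range (T : E →ₗ[ℂ] F)) : ℤ)

/-!
The range of `T₀` is closed of finite codimension, so adding the dense subspace `Y₁` to it gives
all of `Y₀`: the map `Y₁ / T₁(X₁) → Y₀ / T₀(X₀)` is onto, and since the kernels coincide and the
indices agree, the two cokernels have the same dimension and this map is bijective. Hence a
finite-dimensional complement `M` of `T₁(X₁)` in `Y₁` is also a complement of `T₀(X₀)` in `Y₀`.
Inverting `T₀` and `T₁` modulo `M` on compatible closed complements of their kernels gives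
bounded maps `S₀`, `S₁` which agree on `Y₁`, so they interpolate to `S_ψ : Y_ψ → X_ψ`, and
`y - T S_ψ y ∈ M` for every `y ∈ Y_ψ`. Thus `M` complements `T(X_ψ)` in `Y_ψ` as well.
-/

open Submodule Module LinearMap

namespace Submodule

section Ring

variable {R V W : Type*} [Ring R] [AddCommGroup V] [Module R V] [AddCommGroup W] [Module R W]
  {f : V →ₗ[R] W} {p : Submodule R V} {q : Submodule R W}

theorem isCompl_comap_of_isCompl_map (hf : Function.Injective f) (h : IsCompl (p.map f) q) :
    IsCompl p (q.comap f) := by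
  refine ⟨disjoint_def.mpr fun x hxp hxq => hf ?_, codisjoint_iff.mpr (eq_top_iff'.mpr fun x => ?_)⟩
  · rw [map_zero]
    exact disjoint_def.mp h.disjoint _ (mem_map_of_mem hxp) hxq
  · obtain ⟨_, ⟨a, ha, rfl⟩, b, hb, hab⟩ := mem_sup.mp (h.sup_eq_top ▸ mem_top : f x ∈ p.map f ⊔ q)
    have hxa : x - a ∈ q.comap f := by rw [mem_comap, map_sub, ← hab, add_sub_cancel_left]; exact hb
    simpa using add_mem_sup ha hxa

theorem isCompl_map_of_isCompl (hpq : q.comap f = p) (htop : range f ⊔ q = ⊤)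
    {m : Submodule R V} (hm : IsCompl p m) : IsCompl q (m.map f) := by
  refine ⟨disjoint_def.mpr ?_, codisjoint_iff.mpr (eq_top_iff.mpr ?_)⟩
  · rintro _ hq ⟨z, hz, rfl⟩
    rw [disjoint_def.mp hm.disjoint z (hpq ▸ hq) hz, map_zero]
  · calc ⊤ = (p ⊔ m).map f ⊔ q := by rw [hm.sup_eq_top, map_top, htop]
      _ ≤ q ⊔ m.map f := by
        rw [map_sup, ← hpq]
        exact sup_le (sup_le (le_sup_of_le_left (map_comap_le f q)) le_sup_right) le_sup_left

end Ring

theorem comap_eq_of_sup_eq_top_of_finrank_quotient_eq {K V W : Type*} [Field K] [AddCommGroup V]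
    [Module K V] [AddCommGroup W] [Module K W] {f : V →ₗ[K] W} {p : Submodule K V}
    {q : Submodule K W} [FiniteDimensional K (V ⧸ p)] [FiniteDimensional K (W ⧸ q)]
    (hpq : p ≤ q.comap f) (htop : range f ⊔ q = ⊤)
    (hrank : finrank K (V ⧸ p) = finrank K (W ⧸ q)) : q.comap f = p := by
  have hsurj : Function.Surjective (p.mapQ q f hpq) := by
    rw [← range_eq_top, range_mapQ, map_mkQ_eq_top, sup_comm, htop]
  have hinj := (injective_iff_surjective_of_finrank_eq_finrank hrank).mpr hsurj
  rw [← ker_eq_bot, ker_mapQ, ← le_bot_iff, map_le_iff_le_comap, comap_bot, ker_mkQ] at hinj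
  exact le_antisymm hinj hpq

theorem sup_eq_top_of_denseRange {𝕜 E F : Type*} [NontriviallyNormedField 𝕜] [CompleteSpace 𝕜]
    [AddCommGroup E] [TopologicalSpace E] [Module 𝕜 E] [AddCommGroup F] [TopologicalSpace F]
    [IsTopologicalAddGroup F] [Module 𝕜 F] [ContinuousSMul 𝕜 F] {p : Submodule 𝕜 F}
    (hp : IsClosed (p : Set F)) [FiniteDimensional 𝕜 (F ⧸ p)] {f : E →L[𝕜] F}
    (hf : DenseRange f) : f.range ⊔ p = ⊤ := by
  have hclosed : IsClosed ((f.range ⊔ p : Submodule 𝕜 F) : Set F) :=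
    isClosed_mono_of_finiteDimensional_quotient hp le_sup_right
  refine eq_top_iff'.mpr fun y => closure_minimal ?_ hclosed (hf y)
  rintro _ ⟨x, rfl⟩
  exact mem_sup_left ⟨x, rfl⟩

end Submodule

theorem LinearMap.eq_of_sub_mem_of_disjoint {R V W : Type*} [Ring R] [AddCommGroup V]
    [Module R V] [AddCommGroup W] [Module R W] (T : V →ₗ[R] W) {U : Submodule R V}
    {N : Submodule R W} (hU : Disjoint (ker T) U) (hN : Disjoint (range T) N) {y : W} {x x' : V}
    (hx : x ∈ U) (hx' : x' ∈ U) (h : y - T x ∈ N) (h' : y - T x' ∈ N) : x = x' := by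
  have hT : T (x - x') = (y - T x') - (y - T x) := by rw [map_sub]; abel
  have hker : x - x' ∈ ker T := by
    rw [mem_ker, disjoint_def.mp hN _ ⟨x - x', rfl⟩ (hT ▸ sub_mem h' h)]
  exact sub_eq_zero.mp (disjoint_def.mp hU _ hker (sub_mem hx hx'))

theorem ContinuousLinearMap.exists_generalizedInverse {𝕜 E F : Type*} [NontriviallyNormedField 𝕜]
    [NormedAddCommGroup E] [NormedSpace 𝕜 E] [CompleteSpace E] [NormedAddCommGroup F]
    [NormedSpace 𝕜 F] [CompleteSpace F] (T : E →L[𝕜] F) {W : Submodule 𝕜 E}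
    {N : Submodule 𝕜 F} (hW : IsClosed (W : Set E)) (hN : IsClosed (N : Set F))
    (hker : IsCompl T.ker W) (hrange : IsCompl T.range N) :
    ∃ S : F →L[𝕜] E, ∀ y, S y ∈ W ∧ y - T (S y) ∈ N := by
  have := hW.completeSpace_coe
  have := hN.completeSpace_coe
  set Φ := T.comp W.subtypeL
  have hΦrange : Φ.range = T.range := by
    simpa [Φ, range_comp] using map_eq_range_iff.mpr hker.symm.codisjoint
  have hΦker : Φ.ker = ⊥ := by
    simpa [Φ, ker_comp, ← disjoint_iff_comap_eq_bot] using hker.symm.disjoint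
  -- by the open mapping theorem, `(w, n) ↦ T w + n` is an isomorphism `W × N ≃L F`
  set e := Φ.coprodSubtypeLEquivOfIsCompl (hΦrange ▸ hrange) hΦker
  refine ⟨W.subtypeL ∘L ContinuousLinearMap.fst 𝕜 W N ∘L e.symm, fun y => ⟨(e.symm y).1.2, ?_⟩⟩
  have hy : T (e.symm y).1 + (e.symm y).2 = y := e.apply_symm_apply y
  change y - T (e.symm y).1 ∈ N
  rw [← eq_sub_of_add_eq' hy]
  exact (e.symm y).2.2

theorem IsFredholm.isClosed_range {E F : Type*} [NormedAddCommGroup E] [NormedSpace ℂ E]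
    [CompleteSpace E] [NormedAddCommGroup F] [NormedSpace ℂ F] [CompleteSpace F]
    {T : E →L[ℂ] F} (hT : IsFredholm T) : IsClosed (T.range : Set F) := by
  have := hT.1
  have := hT.2
  obtain ⟨W, hW, hWc⟩ := (ClosedComplemented.of_finiteDimensional T.ker).exists_isClosed_isCompl
  obtain ⟨N, hN⟩ := T.range.exists_isCompl
  have : FiniteDimensional ℂ N := (quotientEquivOfIsCompl _ N hN).finiteDimensional
  obtain ⟨S, hS⟩ := T.exists_generalizedInverse hW N.closed_of_finiteDimensional hWc hN
  have hrange : (T.range : Set F) = {y | T (S y) = y} := by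
    ext y
    refine ⟨fun hy => ?_, fun hy => ⟨S y, hy⟩⟩
    have := disjoint_def.mp hN.disjoint _ (sub_mem hy ⟨S y, rfl⟩) (hS y).2
    exact (sub_eq_zero.mp this).symm
  rw [hrange]
  exact isClosed_eq (by fun_prop) continuous_id

theorem isFredholm_and_fIndex_eq_of_isCompl_map {E E' F F' : Type*} [NormedAddCommGroup E]
    [NormedSpace ℂ E] [NormedAddCommGroup E'] [NormedSpace ℂ E'] [NormedAddCommGroup F]
    [NormedSpace ℂ F] [NormedAddCommGroup F'] [NormedSpace ℂ F'] {T : E →L[ℂ] F}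
    {T' : E' →L[ℂ] F'} (hT' : IsFredholm T') {j : E' →ₗ[ℂ] E} (hj : Function.Injective j)
    {j' : F' →ₗ[ℂ] F} (hj' : Function.Injective j') (hker : T'.ker.map j = T.ker)
    {M : Submodule ℂ F'} (hM : IsCompl T'.range M) (hM' : IsCompl T.range (M.map j')) :
    IsFredholm T ∧ fIndex T = fIndex T' := by
  have := hT'.1
  have := hT'.2
  have : FiniteDimensional ℂ M := (quotientEquivOfIsCompl _ _ hM).finiteDimensional
  have hkerrank : finrank ℂ T.ker = finrank ℂ T'.ker := by
    rw [← hker]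
    exact (equivMapOfInjective j hj _).finrank_eq.symm
  have hcokrank : finrank ℂ (F ⧸ T.range) = finrank ℂ (F' ⧸ T'.range) := by
    rw [(quotientEquivOfIsCompl _ _ hM').finrank_eq, (quotientEquivOfIsCompl _ _ hM).finrank_eq]
    exact (equivMapOfInjective j' hj' M).finrank_eq.symm
  refine ⟨⟨hker ▸ inferInstance, (quotientEquivOfIsCompl _ _ hM').symm.finiteDimensional⟩, ?_⟩
  unfold fIndex
  rw [hkerrank, hcokrank]

section TwoLevels

variable {X0 X1 Y0 Y1 : Type*} [NormedAddCommGroup X0] [NormedSpace ℂ X0]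
  [NormedAddCommGroup X1] [NormedSpace ℂ X1] [NormedAddCommGroup Y0] [NormedSpace ℂ Y0]
  [NormedAddCommGroup Y1] [NormedSpace ℂ Y1]
  {T0 : X0 →L[ℂ] Y0} {T1 : X1 →L[ℂ] Y1} {ιX : X1 →L[ℂ] X0} {ιY : Y1 →L[ℂ] Y0}

theorem comap_range_eq_range_of_fIndex_eq (hT : ∀ x, T0 (ιX x) = ιY (T1 x))
    (hιX : Function.Injective ιX) (hker : T1.ker.map (ιX : X1 →ₗ[ℂ] X0) = T0.ker)
    [FiniteDimensional ℂ (Y0 ⧸ T0.range)] [FiniteDimensional ℂ (Y1 ⧸ T1.range)]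
    (hind : fIndex T1 = fIndex T0) (htop : ιY.range ⊔ T0.range = ⊤) :
    T0.range.comap (ιY : Y1 →ₗ[ℂ] Y0) = T1.range := by
  have hle : T1.range ≤ T0.range.comap (ιY : Y1 →ₗ[ℂ] Y0) := by
    rintro _ ⟨x, rfl⟩
    exact ⟨ιX x, hT x⟩
  have hkerrank : finrank ℂ T1.ker = finrank ℂ T0.ker := by
    rw [← hker]
    exact (equivMapOfInjective _ hιX _).finrank_eq
  refine comap_eq_of_sup_eq_top_of_finrank_quotient_eq hle htop ?_
  unfold fIndex at hind
  omega

theorem exists_compatible_generalizedInverses [CompleteSpace X0] [CompleteSpace X1]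
    [CompleteSpace Y0] [CompleteSpace Y1] (hT : ∀ x, T0 (ιX x) = ιY (T1 x))
    (hιX : Function.Injective ιX) (hker : T1.ker.map (ιX : X1 →ₗ[ℂ] X0) = T0.ker)
    [FiniteDimensional ℂ T0.ker] {M : Submodule ℂ Y1} [FiniteDimensional ℂ M]
    (hM : IsCompl T1.range M) (hM0 : IsCompl T0.range (M.map (ιY : Y1 →ₗ[ℂ] Y0))) :
    ∃ (S0 : Y0 →L[ℂ] X0) (S1 : Y1 →L[ℂ] X1), (∀ y, S0 (ιY y) = ιX (S1 y)) ∧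
      ∀ y, y - T0 (S0 y) ∈ M.map (ιY : Y1 →ₗ[ℂ] Y0) := by
  obtain ⟨W, hW, hW0⟩ := (ClosedComplemented.of_finiteDimensional T0.ker).exists_isClosed_isCompl
  have hW1 : IsCompl T1.ker (W.comap (ιX : X1 →ₗ[ℂ] X0)) :=
    isCompl_comap_of_isCompl_map hιX (hker ▸ hW0)
  obtain ⟨S0, hS0⟩ := T0.exists_generalizedInverse hW (closed_of_finiteDimensional _) hW0 hM0
  obtain ⟨S1, hS1⟩ := T1.exists_generalizedInverse (hW.preimage ιX.continuous)
    M.closed_of_finiteDimensional hW1 hM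
  refine ⟨S0, S1, fun y => ?_, fun y => (hS0 y).2⟩
  have hsub : ιY y - T0 (ιX (S1 y)) ∈ M.map (ιY : Y1 →ₗ[ℂ] Y0) := by
    rw [hT, ← map_sub]
    exact mem_map_of_mem (hS1 y).2
  exact (T0 : X0 →ₗ[ℂ] Y0).eq_of_sub_mem_of_disjoint hW0.disjoint hM0.disjoint (hS0 _).1
    (hS1 y).1 (hS0 _).2 hsub

end TwoLevels

section Intertwining

variable {X0 Xm Y0 Ym : Type*} [NormedAddCommGroup X0] [NormedSpace ℂ X0]
  [NormedAddCommGroup Xm] [NormedSpace ℂ Xm] [NormedAddCommGroup Y0] [NormedSpace ℂ Y0]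
  [NormedAddCommGroup Ym] [NormedSpace ℂ Ym]
  {T0 : X0 →L[ℂ] Y0} {Tm : Xm →L[ℂ] Ym} {kX : Xm →L[ℂ] X0} {kY : Ym →L[ℂ] Y0}

theorem ker_eq_comap_ker_of_intertwining (hkY : Function.Injective kY)
    (hTm : ∀ x, T0 (kX x) = kY (Tm x)) : Tm.ker = T0.ker.comap (kX : Xm →ₗ[ℂ] X0) := by
  ext x
  simp only [mem_comap, mem_ker, ContinuousLinearMap.coe_coe, hTm, map_eq_zero_iff _ hkY]

theorem range_eq_comap_and_isCompl_of_intertwining (hkY : Function.Injective kY)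
    (hTm : ∀ x, T0 (kX x) = kY (Tm x)) {S0 : Y0 → X0} {Sm : Ym → Xm}
    (hSm : ∀ y, S0 (kY y) = kX (Sm y)) {N : Submodule ℂ Ym}
    (hS0 : ∀ y, y - T0 (S0 y) ∈ N.map (kY : Ym →ₗ[ℂ] Y0))
    (hN : Disjoint T0.range (N.map (kY : Ym →ₗ[ℂ] Y0))) :
    Tm.range = T0.range.comap (kY : Ym →ₗ[ℂ] Y0) ∧ IsCompl Tm.range N := by
  have hle : Tm.range ≤ T0.range.comap (kY : Ym →ₗ[ℂ] Y0) := by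
    rintro _ ⟨x, rfl⟩
    exact ⟨kX x, hTm x⟩
  have hsup : Tm.range ⊔ N = ⊤ := by
    refine eq_top_iff'.mpr fun y => ?_
    have hy : y - Tm (Sm y) ∈ N := by
      rw [← comap_map_eq_of_injective hkY N, mem_comap, ContinuousLinearMap.coe_coe, map_sub,
        ← hTm, ← hSm]
      exact hS0 (kY y)
    simpa using add_mem_sup (mem_range_self (Tm : Xm →ₗ[ℂ] Ym) (Sm y)) hy
  have hdisj : Disjoint (T0.range.comap (kY : Ym →ₗ[ℂ] Y0)) N := by
    refine disjoint_def.mpr fun z hz hzN => hkY ?_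
    rw [map_zero]
    exact disjoint_def.mp hN _ hz (mem_map_of_mem hzN)
  exact ⟨eq_of_le_of_inf_le_of_sup_le (z := N) hle (hdisj.eq_bot ▸ bot_le) (hsup ▸ le_top),
    hdisj.mono_left hle, codisjoint_iff.mpr hsup⟩

end Intertwining

/-- `Xm` and `Ym` stand for `X_ψ` and `Y_ψ`, embedded as `X₁ → X_ψ → X₀` by `jX`, `kX` and as
`Y₁ → Y_ψ → Y₀` by `jY`, `kY`; `hinterpYX` is the interpolation property of `ψ` for maps from
`[Y₀, Y₁]` to `[X₀, X₁]`, and `T0`, `T1`, `Tm` are the three realizations of `T`. -/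
theorem stmt17_general
    {X0 X1 Xm Y0 Y1 Ym : Type*}
    [NormedAddCommGroup X0] [InnerProductSpace ℂ X0] [CompleteSpace X0]
    [NormedAddCommGroup X1] [InnerProductSpace ℂ X1] [CompleteSpace X1]
    [NormedAddCommGroup Xm] [InnerProductSpace ℂ Xm]
    [NormedAddCommGroup Y0] [InnerProductSpace ℂ Y0] [CompleteSpace Y0]
    [NormedAddCommGroup Y1] [InnerProductSpace ℂ Y1] [CompleteSpace Y1]
    [NormedAddCommGroup Ym] [InnerProductSpace ℂ Ym]
    (jX : X1 →L[ℂ] Xm) (kX : Xm →L[ℂ] X0)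
    (jY : Y1 →L[ℂ] Ym) (kY : Ym →L[ℂ] Y0)
    (hjX : Function.Injective jX) (hkX : Function.Injective kX)
    (hjY : Function.Injective jY) (hkY : Function.Injective kY)
    (hdjY : DenseRange jY) (hdkY : DenseRange kY)
    (hinterpYX : ∀ (S0 : Y0 →L[ℂ] X0) (S1 : Y1 →L[ℂ] X1),
      (∀ y, S0 (kY (jY y)) = kX (jX (S1 y))) →
      ∃ Sm : Ym →L[ℂ] Xm, ∀ y, S0 (kY y) = kX (Sm y))
    (T0 : X0 →L[ℂ] Y0) (T1 : X1 →L[ℂ] Y1) (Tm : Xm →L[ℂ] Ym)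
    (hT1 : ∀ x, T0 (kX (jX x)) = kY (jY (T1 x)))
    (hTm : ∀ x, T0 (kX x) = kY (Tm x))
    (hF0 : IsFredholm T0) (hF1 : IsFredholm T1)
    (hker : Submodule.map ((kX.comp jX) : X1 →ₗ[ℂ] X0) (LinearMap.ker (T1 : X1 →ₗ[ℂ] Y1)) =
      LinearMap.ker (T0 : X0 →ₗ[ℂ] Y0))
    (hind : fIndex T1 = fIndex T0) :
    IsFredholm Tm ∧
      Submodule.map (jX : X1 →ₗ[ℂ] Xm) (LinearMap.ker (T1 : X1 →ₗ[ℂ] Y1)) = LinearMap.ker (Tm : Xm →ₗ[ℂ] Ym) ∧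
      fIndex Tm = fIndex T0 ∧
      kY '' Set.range Tm = Set.range kY ∩ Set.range T0 := by
  have := hF0.1
  have := hF0.2
  have := hF1.2
  have hιX : Function.Injective (kX.comp jX) := hkX.comp hjX
  have htop : (kY.comp jY).range ⊔ T0.range = ⊤ :=
    sup_eq_top_of_denseRange hF0.isClosed_range (hdkY.comp hdjY kY.continuous)
  have hrange := comap_range_eq_range_of_fIndex_eq hT1 hιX hker hind htop
  obtain ⟨M, hM⟩ := T1.range.exists_isCompl
  have : FiniteDimensional ℂ M := (quotientEquivOfIsCompl _ _ hM).finiteDimensional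
  have hM0 := isCompl_map_of_isCompl hrange htop hM
  obtain ⟨S0, S1, hS, hS0⟩ := exists_compatible_generalizedInverses hT1 hιX hker hM hM0
  obtain ⟨Sm, hSm⟩ := hinterpYX S0 S1 hS
  rw [ContinuousLinearMap.toLinearMap_comp, map_comp] at hS0 hM0
  obtain ⟨hRm, hCm⟩ := range_eq_comap_and_isCompl_of_intertwining hkY hTm hSm hS0 hM0.disjoint
  have hKm : T1.ker.map (jX : X1 →ₗ[ℂ] Xm) = Tm.ker := by
    rw [ker_eq_comap_ker_of_intertwining hkY hTm, ← hker, ContinuousLinearMap.toLinearMap_comp,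
      map_comp, comap_map_eq_of_injective hkX]
  obtain ⟨hFm, hIm⟩ := isFredholm_and_fIndex_eq_of_isCompl_map hF1 hjX hjY hKm hM hCm
  have hRm' : Set.range Tm = kY ⁻¹' Set.range T0 := by
    simpa only [comap_coe, coe_range, ContinuousLinearMap.coe_coe] using congrArg SetLike.coe hRm
  exact ⟨hFm, hKm, hIm.trans hind, by rw [hRm']; exact Set.image_preimage_eq_range_inter⟩

/-- Interpolation of Fredholm operators.  Here `[X₀, X₁]` and `[Y₀, Y₁]` are regular
pairs of Hilbert spaces (`X₁ ↪ X₀` continuously and densely, via `kX ∘ jX`), and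
`Xm = X_ψ`, `Ym = Y_ψ` are the interpolation spaces with an interpolation parameter
`ψ`, encoded through the dense continuous inclusions `X₁ ↪ X_ψ ↪ X₀` (maps `jX`, `kX`)
and through the interpolation property: every linear map bounded on both endpoint
couples (in any of the four directions) is bounded on the ψ-spaces.  If `T` restricts
to bounded Fredholm operators `T : X₀ → Y₀` and `T : X₁ → Y₁` with common kernel and
equal index, then the interpolated operator `T : X_ψ → Y_ψ` is Fredholm with the same
kernel and index, and its range is `Y_ψ ∩ T(X₀)`. -/
theorem stmt17
    {X0 X1 Xm Y0 Y1 Ym : Type*}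
    [NormedAddCommGroup X0] [InnerProductSpace ℂ X0] [CompleteSpace X0]
    [NormedAddCommGroup X1] [InnerProductSpace ℂ X1] [CompleteSpace X1]
    [NormedAddCommGroup Xm] [InnerProductSpace ℂ Xm] [CompleteSpace Xm]
    [NormedAddCommGroup Y0] [InnerProductSpace ℂ Y0] [CompleteSpace Y0]
    [NormedAddCommGroup Y1] [InnerProductSpace ℂ Y1] [CompleteSpace Y1]
    [NormedAddCommGroup Ym] [InnerProductSpace ℂ Ym] [CompleteSpace Ym]
    (jX : X1 →L[ℂ] Xm) (kX : Xm →L[ℂ] X0)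
    (jY : Y1 →L[ℂ] Ym) (kY : Ym →L[ℂ] Y0)
    (hjX : Function.Injective jX) (hkX : Function.Injective kX)
    (hjY : Function.Injective jY) (hkY : Function.Injective kY)
    (hdjX : DenseRange jX) (hdkX : DenseRange kX)
    (hdjY : DenseRange jY) (hdkY : DenseRange kY)
    (hinterpXY : ∀ (S0 : X0 →L[ℂ] Y0) (S1 : X1 →L[ℂ] Y1),
      (∀ x, S0 (kX (jX x)) = kY (jY (S1 x))) →
      ∃ Sm : Xm →L[ℂ] Ym, ∀ x, S0 (kX x) = kY (Sm x))
    (hinterpYX : ∀ (S0 : Y0 →L[ℂ] X0) (S1 : Y1 →L[ℂ] X1),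
      (∀ y, S0 (kY (jY y)) = kX (jX (S1 y))) →
      ∃ Sm : Ym →L[ℂ] Xm, ∀ y, S0 (kY y) = kX (Sm y))
    (hinterpXX : ∀ (S0 : X0 →L[ℂ] X0) (S1 : X1 →L[ℂ] X1),
      (∀ x, S0 (kX (jX x)) = kX (jX (S1 x))) →
      ∃ Sm : Xm →L[ℂ] Xm, ∀ x, S0 (kX x) = kX (Sm x))
    (hinterpYY : ∀ (S0 : Y0 →L[ℂ] Y0) (S1 : Y1 →L[ℂ] Y1),
      (∀ y, S0 (kY (jY y)) = kY (jY (S1 y))) →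
      ∃ Sm : Ym →L[ℂ] Ym, ∀ y, S0 (kY y) = kY (Sm y))
    (T0 : X0 →L[ℂ] Y0) (T1 : X1 →L[ℂ] Y1) (Tm : Xm →L[ℂ] Ym)
    (hT1 : ∀ x, T0 (kX (jX x)) = kY (jY (T1 x)))
    (hTm : ∀ x, T0 (kX x) = kY (Tm x))
    (hF0 : IsFredholm T0) (hF1 : IsFredholm T1)
    (hker : Submodule.map ((kX.comp jX) : X1 →ₗ[ℂ] X0) (LinearMap.ker (T1 : X1 →ₗ[ℂ] Y1)) =
      LinearMap.ker (T0 : X0 →ₗ[ℂ] Y0))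
    (hind : fIndex T1 = fIndex T0) :
    IsFredholm Tm ∧
      Submodule.map (jX : X1 →ₗ[ℂ] Xm) (LinearMap.ker (T1 : X1 →ₗ[ℂ] Y1)) = LinearMap.ker (Tm : Xm →ₗ[ℂ] Ym) ∧
      fIndex Tm = fIndex T0 ∧
      kY '' Set.range Tm = Set.range kY ∩ Set.range T0 :=
  stmt17_general jX kX jY kY hjX hkX hjY hkY hdjY hdkY hinterpYX T0 T1 Tm hT1 hTm hF0 hF1 hker hind
end
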